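/- arXiv:2108.11466 — 7 statements merged into one kernel-verified Lean document; each statement's English description precedes it below -/
import Mathlib

section
/- (Theorem 1) The characteristic polynomial of the extended nested exchangeable correlation matrix R equals (X − λ1)^{MK(L−1)} · (X − λ2)^{M(K−1)} · (X − λ3)^{M−1} · (X − λ4); in other words, R has eigenvalues λ1, λ2, λ3, λ4 with algebraic multiplicities MK(L−1), M(K−1), M−1, and 1, respectively. -/
open Matrix Polynomial Finset
open scoped Kronecker

noncomputable section

/-- Extended nested exchangeable correlation matrix: the ((j,k,l),(j',k',l')) entry equals
1 if (j,k,l)=(j',k',l'), `a0` if j=j', k=k', l≠l', `a1` if j=j', k≠k', and `a2` if j≠j'. -/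
def Rmat (M K L : ℕ) (a0 a1 a2 : ℝ) :
    Matrix (Fin M × Fin K × Fin L) (Fin M × Fin K × Fin L) ℝ :=
  Matrix.of fun p q =>
    if p = q then 1
    else if p.1 = q.1 ∧ p.2.1 = q.2.1 then a0
    else if p.1 = q.1 then a1
    else a2

def lam1 (a0 : ℝ) : ℝ := 1 - a0

def lam2 (L : ℕ) (a0 a1 : ℝ) : ℝ := 1 + ((L : ℝ) - 1) * a0 - (L : ℝ) * a1

def lam3 (K L : ℕ) (a0 a1 a2 : ℝ) : ℝ :=
  1 + ((L : ℝ) - 1) * a0 + (L : ℝ) * ((K : ℝ) - 1) * a1 - (L : ℝ) * (K : ℝ) * a2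

def lam4 (M K L : ℕ) (a0 a1 a2 : ℝ) : ℝ :=
  1 + ((L : ℝ) - 1) * a0 + (L : ℝ) * ((K : ℝ) - 1) * a1
    + (L : ℝ) * (K : ℝ) * ((M : ℝ) - 1) * a2

section Aux


def Jm (n : ℕ) : Matrix (Fin n) (Fin n) ℝ := Matrix.of fun _ _ => 1

def Hm (n : ℕ) [NeZero n] : Matrix (Fin n) (Fin n) ℝ :=
  Matrix.of fun r c => if c = 0 then 1 else (if r = c then (1:ℝ) else 0) - (if r = 0 then 1 else 0)

def Gm (n : ℕ) [NeZero n] : Matrix (Fin n) (Fin n) ℝ :=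
  Matrix.of fun r c => if r = 0 then (n:ℝ)⁻¹ else (if r = c then 1 else 0) - (n:ℝ)⁻¹

def Em (n : ℕ) [NeZero n] : Matrix (Fin n) (Fin n) ℝ :=
  Matrix.diagonal (fun i => if i = 0 then (n:ℝ) else 0)

lemma Hm_colsum (n : ℕ) [NeZero n] (c : Fin n) :
    ∑ i, Hm n i c = if c = 0 then (n : ℝ) else 0 := by
  by_cases hc : c = 0
  · simp [Hm, hc]
  · simp [Hm, hc, Finset.sum_sub_distrib]

lemma Gm_mul_Hm (n : ℕ) [NeZero n] : Gm n * Hm n = 1 := by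
  have hn : (n : ℝ) ≠ 0 := Nat.cast_ne_zero.mpr (NeZero.ne n)
  ext r c
  rw [Matrix.mul_apply]
  by_cases hr : r = 0
  · have : ∀ i, Gm n r i * Hm n i c = (n:ℝ)⁻¹ * Hm n i c := by
      intro i; simp [Gm, hr]
    rw [Finset.sum_congr rfl fun i _ => this i, ← Finset.mul_sum, Hm_colsum]
    by_cases hc : c = 0
    · simp [hc, hr, inv_mul_cancel₀ hn, Matrix.one_apply]
    · simp [hc, hr, Matrix.one_apply, Ne.symm hc]
  · have : ∀ i, Gm n r i * Hm n i c
        = (if r = i then 1 else 0) * Hm n i c - (n:ℝ)⁻¹ * Hm n i c := by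
      intro i; simp [Gm, hr]; by_cases h : r = i <;> simp [h, eq_comm] <;> ring
    rw [Finset.sum_congr rfl fun i _ => this i, Finset.sum_sub_distrib, ← Finset.mul_sum,
      Hm_colsum]
    simp only [ite_mul, one_mul, zero_mul, Finset.sum_ite_eq, Finset.mem_univ, if_true]
    by_cases hc : c = 0
    · simp [hc, Hm, hr, inv_mul_cancel₀ hn, Matrix.one_apply]
    · simp [hc, Hm, hr, Matrix.one_apply]

lemma Jm_mul_Hm (n : ℕ) [NeZero n] : Jm n * Hm n = Hm n * Em n := by
  ext r c
  rw [Matrix.mul_apply]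
  have : ∀ i, Jm n r i * Hm n i c = Hm n i c := by intro i; simp [Jm]
  rw [Finset.sum_congr rfl fun i _ => this i, Hm_colsum]
  by_cases hc : c = 0 <;> simp [Em, Matrix.mul_diagonal, hc, Hm]
variable (M K L : ℕ) [NeZero M] [NeZero K] [NeZero L]

lemma Rmat_eq (a0 a1 a2 : ℝ) :
    Rmat M K L a0 a1 a2 =
      (1 - a0) • (1 : Matrix (Fin M × Fin K × Fin L) _ ℝ)
      + (a0 - a1) • ((1 : Matrix (Fin M) _ ℝ) ⊗ₖ ((1 : Matrix (Fin K) _ ℝ) ⊗ₖ Jm L))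
      + (a1 - a2) • ((1 : Matrix (Fin M) _ ℝ) ⊗ₖ (Jm K ⊗ₖ Jm L))
      + a2 • (Jm M ⊗ₖ (Jm K ⊗ₖ Jm L)) := by
  ext ⟨j, k, l⟩ ⟨j', k', l'⟩
  simp only [Rmat, Matrix.of_apply, Matrix.add_apply, Matrix.smul_apply, kroneckerMap_apply,
    Matrix.one_apply, Jm, Prod.mk.injEq, smul_eq_mul]
  by_cases h1 : j = j' <;> by_cases h2 : k = k' <;> by_cases h3 : l = l' <;>
    simp [h1, h2, h3, Prod.ext_iff] <;> ring

def Pm : Matrix (Fin M × Fin K × Fin L) (Fin M × Fin K × Fin L) ℝ :=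
  Hm M ⊗ₖ (Hm K ⊗ₖ Hm L)

def dvec (a0 a1 a2 : ℝ) : Fin M × Fin K × Fin L → ℝ := fun p =>
  if p.2.2 = 0 then
    (if p.2.1 = 0 then
      (if p.1 = 0 then
        1 + ((L:ℝ)-1)*a0 + (L:ℝ)*((K:ℝ)-1)*a1 + (L:ℝ)*(K:ℝ)*((M:ℝ)-1)*a2
       else 1 + ((L:ℝ)-1)*a0 + (L:ℝ)*((K:ℝ)-1)*a1 - (L:ℝ)*(K:ℝ)*a2)
     else 1 + ((L:ℝ)-1)*a0 - (L:ℝ)*a1)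
  else 1 - a0

lemma Dm_eq (a0 a1 a2 : ℝ) :
    (1 - a0) • (1 : Matrix (Fin M × Fin K × Fin L) _ ℝ)
      + (a0 - a1) • ((1 : Matrix (Fin M) _ ℝ) ⊗ₖ ((1 : Matrix (Fin K) _ ℝ) ⊗ₖ Em L))
      + (a1 - a2) • ((1 : Matrix (Fin M) _ ℝ) ⊗ₖ (Em K ⊗ₖ Em L))
      + a2 • (Em M ⊗ₖ (Em K ⊗ₖ Em L))
    = Matrix.diagonal (dvec M K L a0 a1 a2) := by
  ext ⟨j, k, l⟩ ⟨j', k', l'⟩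
  simp only [Matrix.add_apply, Matrix.smul_apply, kroneckerMap_apply, Matrix.one_apply, Em,
    Matrix.diagonal_apply, dvec, Prod.mk.injEq, smul_eq_mul]
  by_cases h1 : j = j' <;> by_cases h2 : k = k' <;> by_cases h3 : l = l' <;>
    simp [h1, h2, h3] <;> (try split_ifs) <;> ring

lemma RP_eq_PD (a0 a1 a2 : ℝ) :
    Rmat M K L a0 a1 a2 * Pm M K L
      = Pm M K L * Matrix.diagonal (dvec M K L a0 a1 a2) := by
  rw [Rmat_eq, ← Dm_eq, Pm]
  simp only [Matrix.add_mul, Matrix.mul_add, Matrix.smul_mul, Matrix.mul_smul,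
    Matrix.one_mul, Matrix.mul_one, ← Matrix.mul_kronecker_mul, Jm_mul_Hm]

lemma charpoly_similar {n : Type*} [Fintype n] [DecidableEq n] (P Q A : Matrix n n ℝ)
    (hQP : Q * P = 1) : (P * A * Q).charpoly = A.charpoly := by
  have hPQ : P * Q = 1 := mul_eq_one_comm.mp hQP
  have hmap : ∀ (B B' : Matrix n n ℝ), ((B * B').map (C : ℝ →+* ℝ[X]))
      = B.map C * B'.map C := fun B B' => Matrix.map_mul
  have key : charmatrix (P * A * Q) = (P.map C) * charmatrix A * (Q.map C) := by
    unfold charmatrix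
    simp only [RingHom.mapMatrix_apply, Matrix.mul_sub, Matrix.sub_mul]
    rw [← hmap, ← hmap, ((Matrix.scalar_commute (X : ℝ[X]) (Commute.all _) (P.map C))).symm.eq]
    rw [Matrix.mul_assoc, Matrix.mul_assoc, ← hmap]
    rw [show P * (A * Q) = P * A * Q from (Matrix.mul_assoc _ _ _).symm, hPQ]
    simp
  rw [Matrix.charpoly, Matrix.charpoly, key, Matrix.det_mul, Matrix.det_mul]
  rw [mul_comm, ← mul_assoc, ← Matrix.det_mul, ← hmap, hQP]
  simp

lemma charpoly_diag {n : Type*} [Fintype n] [DecidableEq n] (d : n → ℝ) :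
    (Matrix.diagonal d).charpoly = ∏ i, (X - C (d i)) := by
  have : charmatrix (Matrix.diagonal d) = Matrix.diagonal (fun i => X - C (d i)) := by
    ext i j
    by_cases h : i = j <;> simp [h, charmatrix_apply, Matrix.diagonal_apply]
  rw [Matrix.charpoly, this, Matrix.det_diagonal]

lemma prod_ite_zero {R : Type*} [CommMonoid R] (n : ℕ) [NeZero n] (f : Fin n → R) (b : R)
    (hf : ∀ i, i ≠ 0 → f i = b) : ∏ i, f i = f 0 * b ^ (n - 1) := by
  rw [← Finset.mul_prod_erase univ f (mem_univ 0)]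
  congr 1
  rw [Finset.prod_congr rfl (fun i hi => hf i (Finset.ne_of_mem_erase hi)), Finset.prod_const,
    Finset.card_erase_of_mem (mem_univ 0), Finset.card_univ, Fintype.card_fin]

lemma final_prod (a0 a1 a2 : ℝ) :
    (∏ p : Fin M × Fin K × Fin L, (X - C (dvec M K L a0 a1 a2 p)))
    = (X - C (1 - a0)) ^ (M * K * (L - 1)) *
      (X - C (1 + ((L:ℝ)-1)*a0 - (L:ℝ)*a1)) ^ (M * (K - 1)) *
      (X - C (1 + ((L:ℝ)-1)*a0 + (L:ℝ)*((K:ℝ)-1)*a1 - (L:ℝ)*(K:ℝ)*a2)) ^ (M - 1) *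
      (X - C (1 + ((L:ℝ)-1)*a0 + (L:ℝ)*((K:ℝ)-1)*a1 + (L:ℝ)*(K:ℝ)*((M:ℝ)-1)*a2)) := by
  set q1 : ℝ[X] := X - C (1 - a0) with hq1
  set q2 : ℝ[X] := X - C (1 + ((L:ℝ)-1)*a0 - (L:ℝ)*a1) with hq2
  set q3 : ℝ[X] := X - C (1 + ((L:ℝ)-1)*a0 + (L:ℝ)*((K:ℝ)-1)*a1 - (L:ℝ)*(K:ℝ)*a2) with hq3
  set q4 : ℝ[X] := X - C (1 + ((L:ℝ)-1)*a0 + (L:ℝ)*((K:ℝ)-1)*a1 + (L:ℝ)*(K:ℝ)*((M:ℝ)-1)*a2)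
    with hq4
  have hl : ∀ (j : Fin M) (k : Fin K),
      (∏ l : Fin L, (X - C (dvec M K L a0 a1 a2 (j, k, l))))
        = (if k = 0 then (if j = 0 then q4 else q3) else q2) * q1 ^ (L - 1) := by
    intro j k
    rw [prod_ite_zero L _ q1 (fun l hl => by simp [dvec, hl, hq1])]
    congr 1
    by_cases h2 : k = 0 <;> by_cases h1 : j = 0 <;> simp [dvec, h1, h2, hq2, hq3, hq4]
  have hk : ∀ j : Fin M,
      (∏ k : Fin K, ((if k = 0 then (if j = 0 then q4 else q3) else q2) * q1 ^ (L - 1)))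
        = ((if j = 0 then q4 else q3) * q2 ^ (K - 1)) * (q1 ^ (L - 1)) ^ K := by
    intro j
    rw [Finset.prod_mul_distrib, Finset.prod_const, Finset.card_univ, Fintype.card_fin,
      prod_ite_zero K _ q2 (fun k hk => by simp [hk])]
    simp
  have hj : (∏ j : Fin M, (((if j = 0 then q4 else q3) * q2 ^ (K - 1)) * (q1 ^ (L - 1)) ^ K))
      = ((q4 * q3 ^ (M - 1)) * (q2 ^ (K - 1)) ^ M) * ((q1 ^ (L - 1)) ^ K) ^ M := by
    rw [Finset.prod_mul_distrib, Finset.prod_mul_distrib, Finset.prod_const, Finset.prod_const,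
      Finset.card_univ, Fintype.card_fin,
      prod_ite_zero M _ q3 (fun j hj => by simp [hj])]
    simp
  calc (∏ p : Fin M × Fin K × Fin L, (X - C (dvec M K L a0 a1 a2 p)))
      = ∏ j : Fin M, ∏ k : Fin K, ∏ l : Fin L, (X - C (dvec M K L a0 a1 a2 (j, k, l))) := by
        rw [Fintype.prod_prod_type]
        exact Finset.prod_congr rfl fun j _ => Fintype.prod_prod_type _
    _ = ∏ j : Fin M, (((if j = 0 then q4 else q3) * q2 ^ (K - 1)) * (q1 ^ (L - 1)) ^ K) := by
        refine Finset.prod_congr rfl fun j _ => ?_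
        rw [Finset.prod_congr rfl fun k _ => hl j k, hk j]
    _ = ((q4 * q3 ^ (M - 1)) * (q2 ^ (K - 1)) ^ M) * ((q1 ^ (L - 1)) ^ K) ^ M := hj
    _ = q1 ^ (M * K * (L - 1)) * q2 ^ (M * (K - 1)) * q3 ^ (M - 1) * q4 := by
        rw [← pow_mul, ← pow_mul, ← pow_mul]
        ring_nf

end Aux

/-- Theorem 1: the characteristic polynomial of `Rmat` is
`(X - λ1)^{MK(L-1)} (X - λ2)^{M(K-1)} (X - λ3)^{M-1} (X - λ4)`. -/
theorem charpoly_Rmat (M K L : ℕ) (hM : 2 ≤ M) (hK : 2 ≤ K) (hL : 2 ≤ L)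
    (a0 a1 a2 : ℝ) :
    (Rmat M K L a0 a1 a2).charpoly =
      (X - C (lam1 a0)) ^ (M * K * (L - 1)) *
      (X - C (lam2 L a0 a1)) ^ (M * (K - 1)) *
      (X - C (lam3 K L a0 a1 a2)) ^ (M - 1) *
      (X - C (lam4 M K L a0 a1 a2)) := by
  haveI : NeZero M := ⟨by omega⟩
  haveI : NeZero K := ⟨by omega⟩
  haveI : NeZero L := ⟨by omega⟩
  have hGP : (Gm M ⊗ₖ (Gm K ⊗ₖ Gm L)) * Pm M K L = 1 := by
    rw [Pm, ← Matrix.mul_kronecker_mul, ← Matrix.mul_kronecker_mul, Gm_mul_Hm, Gm_mul_Hm, Gm_mul_Hm,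
      Matrix.one_kronecker_one, Matrix.one_kronecker_one]
  have hPG : Pm M K L * (Gm M ⊗ₖ (Gm K ⊗ₖ Gm L)) = 1 := mul_eq_one_comm.mp hGP
  have hR : Rmat M K L a0 a1 a2
      = Pm M K L * Matrix.diagonal (dvec M K L a0 a1 a2) * (Gm M ⊗ₖ (Gm K ⊗ₖ Gm L)) := by
    calc Rmat M K L a0 a1 a2
        = Rmat M K L a0 a1 a2 * (Pm M K L * (Gm M ⊗ₖ (Gm K ⊗ₖ Gm L))) := by rw [hPG, mul_one]
      _ = (Rmat M K L a0 a1 a2 * Pm M K L) * (Gm M ⊗ₖ (Gm K ⊗ₖ Gm L)) := by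
          rw [Matrix.mul_assoc]
      _ = Pm M K L * Matrix.diagonal (dvec M K L a0 a1 a2) * (Gm M ⊗ₖ (Gm K ⊗ₖ Gm L)) := by
          rw [RP_eq_PD]
  rw [hR, charpoly_similar _ _ _ hGP, charpoly_diag, final_prod, lam1, lam2, lam3, lam4]
end
end

section
/- The determinant of the extended nested exchangeable correlation matrix R equals λ1^{MK(L−1)} · λ2^{M(K−1)} · λ3^{M−1} · λ4. -/
open Matrix Polynomial Finset

noncomputable section

def blow {ι : Type*} (n : ℕ) (B : Matrix ι ι ℝ) : Matrix (ι × Fin n) (ι × Fin n) ℝ :=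
  Matrix.of fun p q => B p.1 q.1

lemma key {ι : Type*} [Fintype ι] [DecidableEq ι] (n : ℕ) (hn : 1 ≤ n)
    (B : Matrix ι ι ℝ) (c : ℝ) (hc : c ≠ 0) :
    (c • (1 : Matrix (ι × Fin n) (ι × Fin n) ℝ) + blow n B).det
      = c ^ (Fintype.card ι * (n - 1)) * (c • (1 : Matrix ι ι ℝ) + (n : ℝ) • B).det := by
  set X : Matrix (ι × Fin n) ι ℝ := Matrix.of fun p i => B p.1 i with hX
  set Y : Matrix ι (ι × Fin n) ℝ := Matrix.of fun i q => if i = q.1 then 1 else 0 with hY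
  have hXY : X * Y = blow n B := by
    ext p q
    simp [hX, hY, blow, Matrix.mul_apply]
  have hYX : Y * X = (n : ℝ) • B := by
    ext i j
    simp [hX, hY, Matrix.mul_apply, Fintype.sum_prod_type, Finset.sum_ite_eq,
      Finset.mul_sum]
  have h1 : c • (1 : Matrix (ι × Fin n) (ι × Fin n) ℝ) + blow n B
      = c • (1 + X * (c⁻¹ • Y)) := by
    rw [smul_add, Matrix.mul_smul, smul_smul, mul_inv_cancel₀ hc, one_smul, hXY]
  rw [h1, Matrix.det_smul, Matrix.det_one_add_mul_comm, Matrix.smul_mul, hYX]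
  have h2 : (1 : Matrix ι ι ℝ) + c⁻¹ • ((n:ℝ) • B) = c⁻¹ • (c • 1 + (n:ℝ) • B) := by
    rw [smul_add, smul_smul, smul_smul, inv_mul_cancel₀ hc, one_smul]
  rw [h2, Matrix.det_smul, Fintype.card_prod, Fintype.card_fin]
  rw [← mul_assoc]
  congr 1
  rw [inv_pow, ← pow_sub₀ c hc (Nat.le_mul_of_pos_right _ (by omega))]
  rw [Nat.mul_sub, mul_one]

lemma blowzero {ι : Type*} [Fintype ι] [DecidableEq ι] [Nonempty ι] (n : ℕ) (hn : 2 ≤ n)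
    (B : Matrix ι ι ℝ) : (blow n B).det = 0 := by
  obtain ⟨i⟩ := ‹Nonempty ι›
  apply Matrix.det_zero_of_row_eq (i := (i, (⟨0, by omega⟩ : Fin n))) (j := (i, ⟨1, by omega⟩))
  · simp [Fin.ext_iff]
  · ext q; simp [blow]

/-- determinant of `Rmat` equals `λ1^{MK(L-1)} λ2^{M(K-1)} λ3^{M-1} λ4`. -/
theorem det_Rmat (M K L : ℕ) (hM : 2 ≤ M) (hK : 2 ≤ K) (hL : 2 ≤ L)
    (a0 a1 a2 : ℝ) :
    (Rmat M K L a0 a1 a2).det =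
      (lam1 a0) ^ (M * K * (L - 1)) * (lam2 L a0 a1) ^ (M * (K - 1)) *
      (lam3 K L a0 a1 a2) ^ (M - 1) * lam4 M K L a0 a1 a2 := by
  haveI : Nonempty (Fin M) := ⟨⟨0, by omega⟩⟩
  haveI : Nonempty (Fin K) := ⟨⟨0, by omega⟩⟩
  set B₁ : Matrix (Fin M × Fin K) (Fin M × Fin K) ℝ :=
    Matrix.of fun p q => if p = q then a0 else if p.1 = q.1 then a1 else a2 with hB₁
  set C₁ : Matrix (Fin M) (Fin M) ℝ :=
    Matrix.of fun j j' => if j = j' then (L:ℝ)*a1 else (L:ℝ)*a2 with hC₁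
  set D : Matrix Unit Unit ℝ := Matrix.of fun _ _ => (K:ℝ)*(L:ℝ)*a2 with hD
  have E1 : (Rmat M K L a0 a1 a2).det
      = (lam1 a0 • (1 : Matrix ((Fin M × Fin K) × Fin L) ((Fin M × Fin K) × Fin L) ℝ)
          + blow L B₁).det := by
    have h : lam1 a0 • (1 : Matrix ((Fin M × Fin K) × Fin L) ((Fin M × Fin K) × Fin L) ℝ)
        + blow L B₁
        = (Rmat M K L a0 a1 a2).submatrix (Equiv.prodAssoc (Fin M) (Fin K) (Fin L))
            (Equiv.prodAssoc (Fin M) (Fin K) (Fin L)) := by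
      ext ⟨⟨j,k⟩,l⟩ ⟨⟨j',k'⟩,l'⟩
      simp only [Matrix.add_apply, Matrix.smul_apply, Matrix.one_apply, hB₁, blow, Rmat,
        Matrix.submatrix_apply, Equiv.prodAssoc_apply, Matrix.of_apply, lam1,
        Prod.mk.injEq, smul_eq_mul]
      by_cases hj : j = j' <;> by_cases hk : k = k' <;> by_cases hl : l = l' <;>
        simp [hj, hk, hl] <;> ring
    rw [h, Matrix.det_submatrix_equiv_self]
  have E2 : lam1 a0 • (1 : Matrix (Fin M × Fin K) (Fin M × Fin K) ℝ) + (L:ℝ) • B₁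
      = lam2 L a0 a1 • 1 + blow K C₁ := by
    ext ⟨j,k⟩ ⟨j',k'⟩
    simp only [Matrix.add_apply, Matrix.smul_apply, Matrix.one_apply, hB₁, hC₁, blow,
      Matrix.of_apply, lam1, lam2, Prod.mk.injEq, smul_eq_mul]
    by_cases hj : j = j' <;> by_cases hk : k = k' <;> simp [hj, hk] <;> ring
  have E3 : (lam2 L a0 a1 • (1 : Matrix (Fin M) (Fin M) ℝ) + (K:ℝ) • C₁).det
      = (lam3 K L a0 a1 a2 • (1 : Matrix (Unit × Fin M) (Unit × Fin M) ℝ)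
          + blow M D).det := by
    have h : lam2 L a0 a1 • (1 : Matrix (Fin M) (Fin M) ℝ) + (K:ℝ) • C₁
        = (lam3 K L a0 a1 a2 • (1 : Matrix (Unit × Fin M) (Unit × Fin M) ℝ)
            + blow M D).submatrix (Equiv.punitProd (Fin M)).symm
            (Equiv.punitProd (Fin M)).symm := by
      ext j j'
      simp only [Matrix.add_apply, Matrix.smul_apply, Matrix.one_apply, hC₁, hD, blow,
        Matrix.of_apply, lam2, lam3, Matrix.submatrix_apply, Prod.mk.injEq, smul_eq_mul]
      by_cases hj : j = j' <;> simp [hj, Equiv.punitProd] <;> ring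
    rw [h, Matrix.det_submatrix_equiv_self]
  have E4 : (lam3 K L a0 a1 a2 • (1 : Matrix Unit Unit ℝ) + (M:ℝ) • D).det
      = lam4 M K L a0 a1 a2 := by
    rw [Matrix.det_unique]
    simp only [Matrix.add_apply, Matrix.smul_apply, Matrix.one_apply_eq, hD,
      Matrix.of_apply, lam3, lam4, smul_eq_mul]
    ring
  have hexp1 : M * K * (L - 1) ≠ 0 :=
    Nat.mul_ne_zero (Nat.mul_ne_zero (by omega) (by omega)) (by omega)
  have hexp2 : M * (K - 1) ≠ 0 := Nat.mul_ne_zero (by omega) (by omega)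
  have hexp3 : M - 1 ≠ 0 := by omega
  rw [E1]
  rcases eq_or_ne (lam1 a0) 0 with h1 | h1
  · rw [h1, zero_smul, zero_add, blowzero L hL, zero_pow hexp1, zero_mul, zero_mul, zero_mul]
  · rw [key L (by omega) B₁ (lam1 a0) h1, Fintype.card_prod, Fintype.card_fin,
      Fintype.card_fin, E2]
    rcases eq_or_ne (lam2 L a0 a1) 0 with h2 | h2
    · rw [h2, zero_smul, zero_add, blowzero K hK, zero_pow hexp2]
      ring
    · rw [key K (by omega) C₁ (lam2 L a0 a1) h2, Fintype.card_fin, E3]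
      rcases eq_or_ne (lam3 K L a0 a1 a2) 0 with h3 | h3
      · rw [h3, zero_smul, zero_add, blowzero M hM, zero_pow hexp3]
        ring
      · rw [key M (by omega) D (lam3 K L a0 a1 a2) h3, E4]
        simp only [Fintype.card_punit, one_mul]
        ring
end
end

section
/- The extended nested exchangeable correlation matrix R is symmetric, and R is positive definite if and only if min{λ1, λ2, λ3, λ4} > 0, i.e., if and only if all four quantities λ1 = 1−α0, λ2 = 1+(L−1)α0−Lα1, λ3 = 1+(L−1)α0+L(K−1)α1−LKα2, and λ4 = 1+(L−1)α0+L(K−1)α1+LK(M−1)α2 are strictly positive. -/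
open Matrix Polynomial Finset

noncomputable section

/-!
The quadratic form of `Rmat` only sees block sums: `xᵀ R x = (1 - α0) A + (α0 - α1) B
+ (α1 - α2) C + α2 D`, where `A = ∑ x²`, `B` and `C` sum the squares of the sums over the last one
and the last two indices, and `D = (∑ x)²`. Multiplied by `LKM` this is
`λ1 KM (LA - B) + λ2 M (KB - C) + λ3 (MC - D) + λ4 D`; the brackets are nonnegative by
Cauchy–Schwarz and add up to `LKM A`, so positive `λ`s make `R` positive definite. Conversely, on
a tensor `f ⊗ g ⊗ h` whose factors are constant or sum to zero the form is a positive multiple of a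
single `λ`.
-/

theorem sum_sq_sum_le_card_mul_sum_sum_sq {ι κ R : Type*} [Fintype ι] [Fintype κ] [Semiring R]
    [LinearOrder R] [IsStrictOrderedRing R] [ExistsAddOfLE R] (x : ι → κ → R) :
    ∑ i, (∑ k, x i k) ^ 2 ≤ Fintype.card κ * ∑ i, ∑ k, x i k ^ 2 := by
  rw [mul_sum]
  exact sum_le_sum fun i _ => sq_sum_le_card_mul_sum_sq

theorem exists_sum_eq_zero_sum_sq_pos {R : Type*} [Ring R] [LinearOrder R]
    [IsStrictOrderedRing R] (ι : Type*) [Fintype ι] [Nontrivial ι] :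
    ∃ u : ι → R, ∑ i, u i = 0 ∧ 0 < ∑ i, u i ^ 2 := by
  classical
  obtain ⟨i, j, hij⟩ := exists_pair_ne ι
  refine ⟨Pi.single i 1 - Pi.single j 1, by simp [sum_sub_distrib], ?_⟩
  exact sum_pos' (fun _ _ => sq_nonneg _) ⟨i, mem_univ i, by simp [hij]⟩

theorem mul_add_mul_add_mul_add_mul_pos {R : Type*} [CommRing R] [LinearOrder R]
    [IsStrictOrderedRing R] {l₁ l₂ l₃ l₄ t₁ t₂ t₃ t₄ : R} (hl₁ : 0 < l₁) (hl₂ : 0 < l₂)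
    (hl₃ : 0 < l₃) (hl₄ : 0 < l₄) (ht₁ : 0 ≤ t₁) (ht₂ : 0 ≤ t₂) (ht₃ : 0 ≤ t₃) (ht₄ : 0 ≤ t₄)
    (ht : 0 < t₁ + t₂ + t₃ + t₄) :
    0 < l₁ * t₁ + l₂ * t₂ + l₃ * t₃ + l₄ * t₄ := by
  have hm : 0 < min (min l₁ l₂) (min l₃ l₄) := by positivity
  nlinarith [min_le_left (min l₁ l₂) (min l₃ l₄), min_le_right (min l₁ l₂) (min l₃ l₄),
    min_le_left l₁ l₂, min_le_right l₁ l₂, min_le_left l₃ l₄, min_le_right l₃ l₄]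

namespace Rmat

variable {M K L : ℕ} (a0 a1 a2 : ℝ)

theorem apply_eq_add_ite (p q : Fin M × Fin K × Fin L) :
    Rmat M K L a0 a1 a2 p q =
      (if p = q then 1 - a0 else 0) + (if p.1 = q.1 ∧ p.2.1 = q.2.1 then a0 - a1 else 0)
      + (if p.1 = q.1 then a1 - a2 else 0) + a2 := by
  obtain ⟨j, k, l⟩ := p
  obtain ⟨j', k', l'⟩ := q
  by_cases hj : j = j' <;> by_cases hk : k = k' <;> by_cases hl : l = l' <;>
    simp [Rmat, hj, hk, hl]

theorem isSymm : (Rmat M K L a0 a1 a2).IsSymm := by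
  ext p q
  simp only [transpose_apply, apply_eq_add_ite, eq_comm]

theorem mulVec_apply (x : Fin M × Fin K × Fin L → ℝ) (j : Fin M) (k : Fin K) (l : Fin L) :
    (Rmat M K L a0 a1 a2 *ᵥ x) (j, k, l) =
      (1 - a0) * x (j, k, l) + (a0 - a1) * ∑ l', x (j, k, l')
      + (a1 - a2) * ∑ k', ∑ l', x (j, k', l') + a2 * ∑ j', ∑ k', ∑ l', x (j', k', l') := by
  simp only [mulVec, dotProduct, apply_eq_add_ite, add_mul, sum_add_distrib, Fintype.sum_prod_type,
    Prod.mk.injEq, ite_and]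
  simp only [← mul_sum]
  simp [ite_mul, mul_sum]

theorem dotProduct_mulVec_self_eq (x : Fin M × Fin K × Fin L → ℝ) :
    x ⬝ᵥ (Rmat M K L a0 a1 a2 *ᵥ x) =
      (1 - a0) * ∑ j, ∑ k, ∑ l, x (j, k, l) ^ 2 + (a0 - a1) * ∑ j, ∑ k, (∑ l, x (j, k, l)) ^ 2
      + (a1 - a2) * ∑ j, (∑ k, ∑ l, x (j, k, l)) ^ 2 + a2 * (∑ j, ∑ k, ∑ l, x (j, k, l)) ^ 2 := by
  simp only [dotProduct, Fintype.sum_prod_type, mulVec_apply, mul_add, sum_add_distrib,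
    mul_left_comm (x _), ← mul_sum, ← sum_mul, sq]

theorem dotProduct_mulVec_tensor (f : Fin M → ℝ) (g : Fin K → ℝ) (h : Fin L → ℝ) :
    (fun p => f p.1 * g p.2.1 * h p.2.2) ⬝ᵥ
        (Rmat M K L a0 a1 a2 *ᵥ fun p => f p.1 * g p.2.1 * h p.2.2) =
      (1 - a0) * ((∑ j, f j ^ 2) * (∑ k, g k ^ 2) * ∑ l, h l ^ 2)
      + (a0 - a1) * ((∑ j, f j ^ 2) * (∑ k, g k ^ 2) * (∑ l, h l) ^ 2)
      + (a1 - a2) * ((∑ j, f j ^ 2) * (∑ k, g k) ^ 2 * (∑ l, h l) ^ 2)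
      + a2 * ((∑ j, f j) * (∑ k, g k) * ∑ l, h l) ^ 2 := by
  simp only [dotProduct_mulVec_self_eq, mul_pow, ← mul_sum, ← sum_mul]

theorem card_mul_form_eq_sum_lam_mul (A B C D : ℝ) :
    L * K * M * ((1 - a0) * A + (a0 - a1) * B + (a1 - a2) * C + a2 * D) =
      lam1 a0 * (K * M * (L * A - B)) + lam2 L a0 a1 * (M * (K * B - C))
      + lam3 K L a0 a1 a2 * (M * C - D) + lam4 M K L a0 a1 a2 * D := by
  unfold lam1 lam2 lam3 lam4
  ring

theorem posDef_of_lam_pos (h₁ : 0 < lam1 a0) (h₂ : 0 < lam2 L a0 a1)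
    (h₃ : 0 < lam3 K L a0 a1 a2) (h₄ : 0 < lam4 M K L a0 a1 a2) :
    (Rmat M K L a0 a1 a2).PosDef := by
  refine .of_dotProduct_mulVec_pos (isHermitian_iff_isSymm.2 (isSymm a0 a1 a2)) fun x hx => ?_
  obtain ⟨⟨j, k, l⟩, -⟩ := Function.ne_iff.1 hx
  have hM : (0 : ℝ) < M := by exact_mod_cast j.pos
  have hK : (0 : ℝ) < K := by exact_mod_cast k.pos
  have hL : (0 : ℝ) < L := by exact_mod_cast l.pos
  have hA : 0 < ∑ j, ∑ k, ∑ l, x (j, k, l) ^ 2 := by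
    simpa [dotProduct, Fintype.sum_prod_type, sq] using dotProduct_star_self_pos_iff.2 hx
  have hB : ∑ j, ∑ k, (∑ l, x (j, k, l)) ^ 2 ≤ L * ∑ j, ∑ k, ∑ l, x (j, k, l) ^ 2 := by
    rw [mul_sum]
    refine sum_le_sum fun j _ => ?_
    simpa using sum_sq_sum_le_card_mul_sum_sum_sq fun k l => x (j, k, l)
  have hC : ∑ j, (∑ k, ∑ l, x (j, k, l)) ^ 2 ≤ K * ∑ j, ∑ k, (∑ l, x (j, k, l)) ^ 2 := by
    simpa using sum_sq_sum_le_card_mul_sum_sum_sq fun j k => ∑ l, x (j, k, l)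
  have hD : (∑ j, ∑ k, ∑ l, x (j, k, l)) ^ 2 ≤ M * ∑ j, (∑ k, ∑ l, x (j, k, l)) ^ 2 := by
    simpa using sq_sum_le_card_mul_sum_sq (s := univ) (f := fun j => ∑ k, ∑ l, x (j, k, l))
  rw [star_trivial, dotProduct_mulVec_self_eq]
  refine pos_of_mul_pos_right ?_ (by positivity : (0 : ℝ) ≤ L * K * M)
  rw [card_mul_form_eq_sum_lam_mul]
  refine mul_add_mul_add_mul_add_mul_pos h₁ h₂ h₃ h₄ ?_ ?_ ?_ (by positivity)
    (by ring_nf; positivity)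
  · exact mul_nonneg (by positivity) (sub_nonneg.2 hB)
  · exact mul_nonneg hM.le (sub_nonneg.2 hC)
  · exact sub_nonneg.2 hD

theorem dotProduct_mulVec_tensor_pos (hR : (Rmat M K L a0 a1 a2).PosDef) {f : Fin M → ℝ}
    {g : Fin K → ℝ} {h : Fin L → ℝ} (hf : 0 < ∑ j, f j ^ 2) (hg : 0 < ∑ k, g k ^ 2)
    (hh : 0 < ∑ l, h l ^ 2) :
    0 < (1 - a0) * ((∑ j, f j ^ 2) * (∑ k, g k ^ 2) * ∑ l, h l ^ 2)
      + (a0 - a1) * ((∑ j, f j ^ 2) * (∑ k, g k ^ 2) * (∑ l, h l) ^ 2)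
      + (a1 - a2) * ((∑ j, f j ^ 2) * (∑ k, g k) ^ 2 * (∑ l, h l) ^ 2)
      + a2 * ((∑ j, f j) * (∑ k, g k) * ∑ l, h l) ^ 2 := by
  obtain ⟨j, -, hj⟩ := exists_ne_zero_of_sum_ne_zero hf.ne'
  obtain ⟨k, -, hk⟩ := exists_ne_zero_of_sum_ne_zero hg.ne'
  obtain ⟨l, -, hl⟩ := exists_ne_zero_of_sum_ne_zero hh.ne'
  have hw : (fun p : Fin M × Fin K × Fin L => f p.1 * g p.2.1 * h p.2.2) ≠ 0 := fun hw =>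
    mul_ne_zero (mul_ne_zero (ne_zero_pow two_ne_zero hj) (ne_zero_pow two_ne_zero hk))
      (ne_zero_pow two_ne_zero hl) (congrFun hw (j, k, l))
  simpa only [star_trivial, dotProduct_mulVec_tensor] using hR.dotProduct_mulVec_pos hw

theorem lam_pos_of_posDef (hM : 2 ≤ M) (hK : 2 ≤ K) (hL : 2 ≤ L)
    (hR : (Rmat M K L a0 a1 a2).PosDef) :
    0 < lam1 a0 ∧ 0 < lam2 L a0 a1 ∧ 0 < lam3 K L a0 a1 a2 ∧ 0 < lam4 M K L a0 a1 a2 := by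
  have : Nontrivial (Fin M) := Fin.nontrivial_iff_two_le.2 hM
  have : Nontrivial (Fin K) := Fin.nontrivial_iff_two_le.2 hK
  have : Nontrivial (Fin L) := Fin.nontrivial_iff_two_le.2 hL
  obtain ⟨u, hu, hu2⟩ := exists_sum_eq_zero_sum_sq_pos (R := ℝ) (Fin M)
  obtain ⟨v, hv, hv2⟩ := exists_sum_eq_zero_sum_sq_pos (R := ℝ) (Fin K)
  obtain ⟨w, hw, hw2⟩ := exists_sum_eq_zero_sum_sq_pos (R := ℝ) (Fin L)
  have hM' : (0 : ℝ) < M := by positivity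
  have hK' : (0 : ℝ) < K := by positivity
  have hL' : (0 : ℝ) < L := by positivity
  have one {n : ℕ} (hn : (0 : ℝ) < n) : 0 < ∑ _ : Fin n, (1 : ℝ) ^ 2 := by simpa using hn
  have sum_one (n : ℕ) : ∑ _ : Fin n, (1 : ℝ) = n := by simp
  refine ⟨?_, ?_, ?_, ?_⟩
  · have := dotProduct_mulVec_tensor_pos a0 a1 a2 hR (one hM') (one hK') hw2
    simp only [one_pow, sum_one, hw] at this
    exact pos_of_mul_pos_right (a := M * K * ∑ l, w l ^ 2) (by unfold lam1; linear_combination this)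
      (by positivity)
  · have := dotProduct_mulVec_tensor_pos a0 a1 a2 hR (one hM') hv2 (one hL')
    simp only [one_pow, sum_one, hv] at this
    exact pos_of_mul_pos_right (a := M * L * ∑ k, v k ^ 2)
      (by unfold lam2; linear_combination this) (by positivity)
  · have := dotProduct_mulVec_tensor_pos a0 a1 a2 hR hu2 (one hK') (one hL')
    simp only [one_pow, sum_one, hu] at this
    exact pos_of_mul_pos_right (a := K * L * ∑ j, u j ^ 2)
      (by unfold lam3; linear_combination this) (by positivity)
  · have := dotProduct_mulVec_tensor_pos a0 a1 a2 hR (one hM') (one hK') (one hL')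
    simp only [one_pow, sum_one] at this
    exact pos_of_mul_pos_right (a := (M : ℝ) * K * L) (by unfold lam4; linear_combination this)
      (by positivity)

end Rmat

/-- `Rmat` is symmetric, and it is positive definite iff all four
eigenvalues `λ1, λ2, λ3, λ4` are strictly positive. -/
theorem Rmat_symm_posDef_iff (M K L : ℕ) (hM : 2 ≤ M) (hK : 2 ≤ K) (hL : 2 ≤ L)
    (a0 a1 a2 : ℝ) :
    (Rmat M K L a0 a1 a2).IsSymm ∧
    ((Rmat M K L a0 a1 a2).PosDef ↔
      0 < lam1 a0 ∧ 0 < lam2 L a0 a1 ∧ 0 < lam3 K L a0 a1 a2 ∧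
        0 < lam4 M K L a0 a1 a2) :=
  ⟨Rmat.isSymm a0 a1 a2, Rmat.lam_pos_of_posDef a0 a1 a2 hM hK hL,
    fun ⟨h₁, h₂, h₃, h₄⟩ => Rmat.posDef_of_lam_pos a0 a1 a2 h₁ h₂ h₃ h₄⟩
end
end

section
/- (Model-based variance for randomization at level 4, Equation (7)) Let π ∈ (0,1) and let ρc, ρt be nonzero real numbers. Let Xc be the MKL×2 matrix whose first column is the all-ones vector 1_{MKL} and whose second column is the zero vector, and let Xt be the MKL×2 matrix whose both columns equal 1_{MKL}. Assume λ1, λ2, λ3, λ4 > 0, and define the 2×2 matrix Σ1 = π ρc^{−2} Xcᵀ R^{−1} Xc + (1−π) ρt^{−2} Xtᵀ R^{−1} Xt. Then Σ1 is invertible and the lower-right (second row, second column) entry of Σ1^{−1} equals (λ4/(MKL)) · (ρc²/π + ρt²/(1−π)). -/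
/-!
With `E_n = J_n / n`, the projections `Q₂ = I ⊗ I ⊗ E_L`, `Q₃ = I ⊗ E_K ⊗ E_L` and
`Q₄ = E_M ⊗ E_K ⊗ E_L` form a decreasing chain (`Qᵢ Qⱼ = Q_{max i j}`), and
`R = λ₁ I + (λ₂ - λ₁) Q₂ + (λ₃ - λ₂) Q₃ + (λ₄ - λ₃) Q₄`. Hence `R⁻¹` is the same combination of
the `λᵢ⁻¹`, and since `Q₄` fixes every matrix with constant columns, `R⁻¹ X = λ₄⁻¹ X` for
`X = Xc, Xt`. This makes `Σ₁ = [[x + y, y], [y, y]]` with `x = MKL π / (λ₄ ρc²)` and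
`y = MKL (1 - π) / (λ₄ ρt²)`, whose inverse has lower-right entry `(x + y) / (x y) = 1/x + 1/y`.
-/

open Matrix Polynomial Finset

noncomputable section

section IdempotentChain

variable {𝕜 A : Type*} [Field 𝕜] [Ring A] [Algebra 𝕜 A]

structure IsIdempotentChain (q₂ q₃ q₄ : A) : Prop where
  mul_self₂ : q₂ * q₂ = q₂
  mul_self₃ : q₃ * q₃ = q₃
  mul_self₄ : q₄ * q₄ = q₄
  mul₂₃ : q₂ * q₃ = q₃
  mul₃₂ : q₃ * q₂ = q₃
  mul₂₄ : q₂ * q₄ = q₄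
  mul₄₂ : q₄ * q₂ = q₄
  mul₃₄ : q₃ * q₄ = q₄
  mul₄₃ : q₄ * q₃ = q₄

/-- Acts as `lᵢ` on the layer `qᵢ - qᵢ₊₁` of the chain, where `q₁ = 1` and `q₅ = 0`. -/
def nestedCombination (q₂ q₃ q₄ : A) (l₁ l₂ l₃ l₄ : 𝕜) : A :=
  l₁ • 1 + (l₂ - l₁) • q₂ + (l₃ - l₂) • q₃ + (l₄ - l₃) • q₄

theorem IsIdempotentChain.nestedCombination_mul_inv {q₂ q₃ q₄ : A}
    (hq : IsIdempotentChain q₂ q₃ q₄) {l₁ l₂ l₃ l₄ : 𝕜}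
    (h₁ : l₁ ≠ 0) (h₂ : l₂ ≠ 0) (h₃ : l₃ ≠ 0) (h₄ : l₄ ≠ 0) :
    nestedCombination q₂ q₃ q₄ l₁ l₂ l₃ l₄ * nestedCombination q₂ q₃ q₄ l₁⁻¹ l₂⁻¹ l₃⁻¹ l₄⁻¹
      = 1 := by
  simp only [nestedCombination, add_mul, mul_add, smul_mul_smul_comm, one_mul, mul_one,
    hq.mul_self₂, hq.mul_self₃, hq.mul_self₄, hq.mul₂₃, hq.mul₃₂, hq.mul₂₄, hq.mul₄₂,
    hq.mul₃₄, hq.mul₄₃]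
  match_scalars <;> field_simp <;> ring

theorem IsIdempotentChain.nestedCombination_mul_right {q₂ q₃ q₄ : A}
    (hq : IsIdempotentChain q₂ q₃ q₄) (l₁ l₂ l₃ l₄ : 𝕜) :
    nestedCombination q₂ q₃ q₄ l₁ l₂ l₃ l₄ * q₄ = l₄ • q₄ := by
  simp only [nestedCombination, add_mul, smul_mul_assoc, one_mul, hq.mul₂₄, hq.mul₃₄,
    hq.mul_self₄]
  module

end IdempotentChain

section Averaging

open Kronecker

variable (𝕜 : Type*) [Field 𝕜]

def averagingMatrix (ι : Type*) [Fintype ι] : Matrix ι ι 𝕜 :=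
  Matrix.of fun _ _ => (Fintype.card ι : 𝕜)⁻¹

variable {𝕜} {ι : Type*} [Fintype ι]

theorem averagingMatrix_mul_replicateRow [CharZero 𝕜] [Nonempty ι] {κ : Type*} (w : κ → 𝕜) :
    averagingMatrix 𝕜 ι * Matrix.replicateRow ι w = Matrix.replicateRow ι w := by
  ext i j
  simp [averagingMatrix, Matrix.mul_apply]

theorem averagingMatrix_mul_self [CharZero 𝕜] [Nonempty ι] :
    averagingMatrix 𝕜 ι * averagingMatrix 𝕜 ι = averagingMatrix 𝕜 ι :=
  averagingMatrix_mul_replicateRow _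

theorem averagingMatrix_kronecker_averagingMatrix {κ : Type*} [Fintype κ] :
    averagingMatrix 𝕜 ι ⊗ₖ averagingMatrix 𝕜 κ = averagingMatrix 𝕜 (ι × κ) := by
  ext p q
  simp [averagingMatrix, Fintype.card_prod, mul_comm]

theorem replicateRow_transpose_mul_replicateRow {m n : Type*} (v : m → 𝕜) (w : n → 𝕜) :
    (Matrix.replicateRow ι v)ᵀ * Matrix.replicateRow ι w
      = (Fintype.card ι : 𝕜) • Matrix.vecMulVec v w := by
  ext i j
  simp [Matrix.mul_apply, Matrix.vecMulVec_apply]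

end Averaging

section NestedMeans

open Kronecker

variable (𝕜 : Type*) [Field 𝕜] (α β γ : Type*) [Fintype α] [Fintype β] [Fintype γ]
  [DecidableEq α] [DecidableEq β]

def providerMean : Matrix (α × β × γ) (α × β × γ) 𝕜 :=
  1 ⊗ₖ (1 ⊗ₖ averagingMatrix 𝕜 γ)

def facilityMean : Matrix (α × β × γ) (α × β × γ) 𝕜 :=
  1 ⊗ₖ (averagingMatrix 𝕜 β ⊗ₖ averagingMatrix 𝕜 γ)

theorem isIdempotentChain_means [DecidableEq γ] [CharZero 𝕜] [Nonempty α] [Nonempty β]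
    [Nonempty γ] :
    IsIdempotentChain (providerMean 𝕜 α β γ) (facilityMean 𝕜 α β γ)
      (averagingMatrix 𝕜 (α × β × γ)) := by
  constructor <;>
    simp only [providerMean, facilityMean, ← averagingMatrix_kronecker_averagingMatrix,
      ← Matrix.mul_kronecker_mul, Matrix.one_mul, Matrix.mul_one, averagingMatrix_mul_self]

end NestedMeans

theorem Rmat_eq_nestedCombination {M K L : ℕ} (hM : M ≠ 0) (hK : K ≠ 0) (hL : L ≠ 0)
    (a0 a1 a2 : ℝ) :
    Rmat M K L a0 a1 a2 =
      nestedCombination (providerMean ℝ (Fin M) (Fin K) (Fin L))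
        (facilityMean ℝ (Fin M) (Fin K) (Fin L)) (averagingMatrix ℝ (Fin M × Fin K × Fin L))
        (lam1 a0) (lam2 L a0 a1) (lam3 K L a0 a1 a2) (lam4 M K L a0 a1 a2) := by
  ext ⟨j, k, l⟩ ⟨j', k', l'⟩
  simp only [Rmat, nestedCombination, providerMean, facilityMean, averagingMatrix, lam1, lam2,
    lam3, lam4, Matrix.of_apply, Matrix.add_apply, Matrix.smul_apply, Matrix.one_apply,
    Matrix.kroneckerMap_apply, Prod.ext_iff, Fintype.card_prod, Fintype.card_fin, smul_eq_mul]
  by_cases hj : j = j' <;> by_cases hk : k = k' <;> by_cases hl : l = l' <;>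
    simp [hj, hk, hl] <;> field_simp <;> ring

theorem Rmat_inv_mul_replicateRow {M K L : ℕ} (hM : M ≠ 0) (hK : K ≠ 0) (hL : L ≠ 0)
    {a0 a1 a2 : ℝ} (h1 : lam1 a0 ≠ 0) (h2 : lam2 L a0 a1 ≠ 0) (h3 : lam3 K L a0 a1 a2 ≠ 0)
    (h4 : lam4 M K L a0 a1 a2 ≠ 0) {n : Type*} (w : n → ℝ) :
    (Rmat M K L a0 a1 a2)⁻¹ * Matrix.replicateRow (Fin M × Fin K × Fin L) w
      = (lam4 M K L a0 a1 a2)⁻¹ • Matrix.replicateRow (Fin M × Fin K × Fin L) w := by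
  have := NeZero.mk hM
  have := NeZero.mk hK
  have := NeZero.mk hL
  have hchain := isIdempotentChain_means ℝ (Fin M) (Fin K) (Fin L)
  have hRinv := Matrix.inv_eq_right_inv (hchain.nestedCombination_mul_inv h1 h2 h3 h4)
  rw [← Rmat_eq_nestedCombination hM hK hL] at hRinv
  nth_rw 1 [← averagingMatrix_mul_replicateRow w]
  rw [← Matrix.mul_assoc, hRinv, hchain.nestedCombination_mul_right, Matrix.smul_mul,
    averagingMatrix_mul_replicateRow]

theorem Matrix.inv_of_fin_two_apply_one_one {K : Type*} [Field K] (a b c d : K) :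
    (!![a, b; c, d])⁻¹ 1 1 = a / (a * d - b * c) := by
  rw [Matrix.inv_def, Matrix.det_fin_two_of, Matrix.adjugate_fin_two_of, Ring.inverse_eq_inv',
    div_eq_inv_mul]
  rfl

/-- Equation (7): model-based variance for randomization at level 4. -/
theorem model_based_variance_level4 (M K L : ℕ) (hM : 2 ≤ M) (hK : 2 ≤ K) (hL : 2 ≤ L)
    (a0 a1 a2 : ℝ) (π ρc ρt : ℝ)
    (hπ : π ∈ Set.Ioo (0 : ℝ) 1) (hρc : ρc ≠ 0) (hρt : ρt ≠ 0)
    (h1 : 0 < lam1 a0) (h2 : 0 < lam2 L a0 a1)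
    (h3 : 0 < lam3 K L a0 a1 a2) (h4 : 0 < lam4 M K L a0 a1 a2)
    (Xc Xt : Matrix (Fin M × Fin K × Fin L) (Fin 2) ℝ)
    (hXc : Xc = Matrix.of fun _ i => if i = 0 then 1 else 0)
    (hXt : Xt = Matrix.of fun _ _ => 1)
    (Sig1 : Matrix (Fin 2) (Fin 2) ℝ)
    (hSig1 : Sig1 = (π * (ρc ^ 2)⁻¹) • (Xcᵀ * (Rmat M K L a0 a1 a2)⁻¹ * Xc)
        + ((1 - π) * (ρt ^ 2)⁻¹) • (Xtᵀ * (Rmat M K L a0 a1 a2)⁻¹ * Xt)) :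
    IsUnit Sig1 ∧
    Sig1⁻¹ 1 1 = lam4 M K L a0 a1 a2 / ((M : ℝ) * (K : ℝ) * (L : ℝ)) *
      (ρc ^ 2 / π + ρt ^ 2 / (1 - π)) := by
  obtain ⟨hπ0, hπ1⟩ := hπ
  have hπ1' : 1 - π ≠ 0 := by linarith
  have hRinv := fun w : Fin 2 → ℝ => Rmat_inv_mul_replicateRow (by omega) (by omega) (by omega)
    h1.ne' h2.ne' h3.ne' h4.ne' w
  set x := π * (ρc ^ 2)⁻¹ * (lam4 M K L a0 a1 a2)⁻¹ * ((M : ℝ) * (K : ℝ) * (L : ℝ)) with hx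
  set y := (1 - π) * (ρt ^ 2)⁻¹ * (lam4 M K L a0 a1 a2)⁻¹ * ((M : ℝ) * (K : ℝ) * (L : ℝ))
    with hy
  have hSig : Sig1 = !![x + y, y; y, y] := by
    rw [hSig1, show Xc = Matrix.replicateRow _ fun i => if i = 0 then 1 else 0 from hXc,
      show Xt = Matrix.replicateRow _ 1 from hXt, Matrix.mul_assoc, Matrix.mul_assoc, hRinv,
      hRinv, Matrix.mul_smul, Matrix.mul_smul, replicateRow_transpose_mul_replicateRow,
      replicateRow_transpose_mul_replicateRow]
    ext i j
    fin_cases i <;> fin_cases j <;> simp [Matrix.vecMulVec_apply, hx, hy] <;> ring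
  have hxy : x * y ≠ 0 := by positivity
  constructor
  · rw [Matrix.isUnit_iff_isUnit_det, hSig, Matrix.det_fin_two_of, isUnit_iff_ne_zero]
    convert hxy using 1
    ring
  · rw [hSig, Matrix.inv_of_fin_two_apply_one_one, hx, hy]
    field_simp
    ring
end
end

section
/- (Theorem 2, randomization at level 3) Let π ∈ (0,1) be such that πM is an integer, let w ∈ {0,1}^M have exactly (1−π)M coordinates equal to 1, and let z = w ⊗ 1_{KL} ∈ ℝ^{MKL} (so z_{jkl} = w_j). Let ρc, ρt be nonzero real numbers, let P be the MKL×MKL diagonal matrix whose (j,k,l) diagonal entry is 1/ρc if z_{jkl} = 0 and 1/ρt if z_{jkl} = 1, and let X be the MKL×2 matrix with first column 1_{MKL} and second column z. Assume λ1, λ2, λ3, λ4 > 0 and define Σ1 = Xᵀ P R^{−1} P X. Then Σ1 is invertible and the lower-right entry of Σ1^{−1} equals (λ3/(MKL)) · (ρc²/π + ρt²/(1−π)) + (λ4 − λ3)(ρc − ρt)²/(MKL). -/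
/-!
The matrices `I ≥ I_{MK} ⊗ J_L / L ≥ I_M ⊗ J_{KL} / (KL) ≥ J_{MKL} / (MKL)` form a chain of
commuting orthogonal projections, and `R` has eigenvalues `λ1, λ2, λ3, λ4` on the successive
differences of this chain; so `R⁻¹` is obtained by inverting the eigenvalues. The columns of `P X`
are constant within each facility, and on such vectors every projection of the chain but the last
acts as the identity. Hence `R⁻¹` acts there as the compound-symmetry matrix
`λ3⁻¹ I_M + (λ4⁻¹ - λ3⁻¹) J_M / M` on facility level, and `Σ1` becomes an explicit `2 × 2` matrix
depending only on the sizes `πM` and `(1 - π)M` of the two arms.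
-/

open Matrix Polynomial Finset

noncomputable section

namespace NestedExchangeable

open Kronecker

def avgMat (n : Type*) [Fintype n] : Matrix n n ℝ := of fun _ _ => (Fintype.card n : ℝ)⁻¹

lemma avgMat_mul_self (n : Type*) [Fintype n] : avgMat n * avgMat n = avgMat n := by
  ext i j
  have hn : (Fintype.card n : ℝ) ≠ 0 := Nat.cast_ne_zero.2 (Fintype.card_pos_iff.2 ⟨i⟩).ne'
  simp only [avgMat, mul_apply, of_apply, sum_const, card_univ, nsmul_eq_mul]
  field_simp

def spectralMat (M K L : ℕ) (l1 l2 l3 l4 : ℝ) :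
    Matrix (Fin M × Fin K × Fin L) (Fin M × Fin K × Fin L) ℝ :=
  l1 • 1 + (l2 - l1) • (1 ⊗ₖ (1 ⊗ₖ avgMat (Fin L)))
    + (l3 - l2) • (1 ⊗ₖ (avgMat (Fin K) ⊗ₖ avgMat (Fin L)))
    + (l4 - l3) • (avgMat (Fin M) ⊗ₖ (avgMat (Fin K) ⊗ₖ avgMat (Fin L)))

lemma Rmat_eq_spectralMat (M K L : ℕ) (a0 a1 a2 : ℝ) :
    Rmat M K L a0 a1 a2 = spectralMat M K L (lam1 a0) (lam2 L a0 a1) (lam3 K L a0 a1 a2)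
      (lam4 M K L a0 a1 a2) := by
  ext ⟨p1, p2, p3⟩ ⟨q1, q2, q3⟩
  have hM : (M : ℝ) ≠ 0 := Nat.cast_ne_zero.2 p1.pos.ne'
  have hK : (K : ℝ) ≠ 0 := Nat.cast_ne_zero.2 p2.pos.ne'
  have hL : (L : ℝ) ≠ 0 := Nat.cast_ne_zero.2 p3.pos.ne'
  simp only [Rmat, spectralMat, avgMat, lam1, lam2, lam3, lam4, of_apply, Matrix.add_apply,
    Matrix.smul_apply, kroneckerMap_apply, one_apply, Fintype.card_fin, smul_eq_mul, Prod.mk.injEq]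
  by_cases h1 : p1 = q1 <;> by_cases h2 : p2 = q2 <;> by_cases h3 : p3 = q3 <;>
    simp [h1, h2, h3] <;> field_simp <;> ring

lemma spectralMat_mul (M K L : ℕ) (l1 l2 l3 l4 m1 m2 m3 m4 : ℝ) :
    spectralMat M K L l1 l2 l3 l4 * spectralMat M K L m1 m2 m3 m4
      = spectralMat M K L (l1 * m1) (l2 * m2) (l3 * m3) (l4 * m4) := by
  simp only [spectralMat, Matrix.add_mul, Matrix.mul_add, Matrix.smul_mul, Matrix.mul_smul,
    ← mul_kronecker_mul, Matrix.one_mul, Matrix.mul_one, avgMat_mul_self]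
  match_scalars <;> ring

lemma spectralMat_one (M K L : ℕ) : spectralMat M K L 1 1 1 1 = 1 := by
  simp [spectralMat]

lemma inv_spectralMat (M K L : ℕ) {l1 l2 l3 l4 : ℝ} (h1 : l1 ≠ 0) (h2 : l2 ≠ 0) (h3 : l3 ≠ 0)
    (h4 : l4 ≠ 0) :
    (spectralMat M K L l1 l2 l3 l4)⁻¹ = spectralMat M K L l1⁻¹ l2⁻¹ l3⁻¹ l4⁻¹ := by
  apply inv_eq_right_inv
  rw [spectralMat_mul, mul_inv_cancel₀ h1, mul_inv_cancel₀ h2, mul_inv_cancel₀ h3,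
    mul_inv_cancel₀ h4, spectralMat_one]

/-- The lift `h ↦ h ⊗ 1_{KL}` of facility-level vectors to unit level. -/
def broadcast (M K L : ℕ) : Matrix (Fin M × Fin K × Fin L) (Fin M) ℝ :=
  of fun p j => (1 : Matrix (Fin M) (Fin M) ℝ) p.1 j

lemma broadcast_mul_apply {M K L : ℕ} {ι : Type*} (H : Matrix (Fin M) ι ℝ)
    (p : Fin M × Fin K × Fin L) (i : ι) : (broadcast M K L * H) p i = H p.1 i := by
  simp [broadcast, mul_apply, one_apply]

lemma transpose_broadcast_mul_broadcast (M K L : ℕ) :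
    (broadcast M K L)ᵀ * broadcast M K L = ((K : ℝ) * L) • 1 := by
  ext i j
  by_cases h : i = j <;> simp [broadcast, mul_apply, one_apply, Fintype.sum_prod_type, h, eq_comm]

lemma spectralMat_mul_broadcast (M K L : ℕ) (l1 l2 l3 l4 : ℝ) :
    spectralMat M K L l1 l2 l3 l4 * broadcast M K L
      = broadcast M K L * (l3 • 1 + (l4 - l3) • avgMat (Fin M)) := by
  ext ⟨p1, p2, p3⟩ j
  have hM : (M : ℝ) ≠ 0 := Nat.cast_ne_zero.2 p1.pos.ne'
  have hK : (K : ℝ) ≠ 0 := Nat.cast_ne_zero.2 p2.pos.ne'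
  have hL : (L : ℝ) ≠ 0 := Nat.cast_ne_zero.2 p3.pos.ne'
  simp only [spectralMat, broadcast, avgMat, mul_apply, Matrix.add_apply, Matrix.smul_apply,
    of_apply, kroneckerMap_apply, one_apply, Fintype.sum_prod_type, Fintype.card_fin]
  by_cases h : p1 = j <;> simp [h, ite_and, sum_add_distrib] <;> field_simp; ring

lemma transpose_mul_spectralMat_mul_broadcast_mul {ι : Type*} (M K L : ℕ) (l1 l2 l3 l4 : ℝ)
    (H : Matrix (Fin M) ι ℝ) :
    (broadcast M K L * H)ᵀ * spectralMat M K L l1 l2 l3 l4 * (broadcast M K L * H)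
      = ((K : ℝ) * L) • (Hᵀ * (l3 • 1 + (l4 - l3) • avgMat (Fin M)) * H) := by
  calc (broadcast M K L * H)ᵀ * spectralMat M K L l1 l2 l3 l4 * (broadcast M K L * H)
      = Hᵀ * ((broadcast M K L)ᵀ * (spectralMat M K L l1 l2 l3 l4 * broadcast M K L) * H) := by
        simp only [transpose_mul, Matrix.mul_assoc]
    _ = Hᵀ * ((broadcast M K L)ᵀ * broadcast M K L
          * (l3 • 1 + (l4 - l3) • avgMat (Fin M)) * H) := by
        rw [spectralMat_mul_broadcast]
        simp only [Matrix.mul_assoc]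
    _ = ((K : ℝ) * L) • (Hᵀ * (l3 • 1 + (l4 - l3) • avgMat (Fin M)) * H) := by
        rw [transpose_broadcast_mul_broadcast]
        simp only [Matrix.smul_mul, Matrix.mul_smul, Matrix.one_mul, Matrix.mul_assoc]

lemma transpose_mul_smul_one_add_smul_avgMat_mul_apply {ι : Type*} {M : ℕ}
    (H : Matrix (Fin M) ι ℝ) (c d : ℝ) (i i' : ι) :
    (Hᵀ * (c • 1 + d • avgMat (Fin M)) * H : Matrix ι ι ℝ) i i'
      = c * ∑ j, H j i * H j i' + d / M * ((∑ j, H j i) * ∑ j, H j i') := by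
  simp only [mul_apply, avgMat, Matrix.add_apply, Matrix.smul_apply, one_apply, of_apply,
    transpose_apply, smul_eq_mul, mul_ite, mul_zero, mul_add, add_mul, sum_add_distrib,
    sum_ite_eq', mem_univ, if_true, mul_sum, sum_mul, Fintype.card_fin]
  congr 1
  · exact sum_congr rfl fun _ _ => by ring
  · exact sum_congr rfl fun _ _ => sum_congr rfl fun _ _ => by ring

lemma sum_eq_card_mul_add_of_two_valued {ι R : Type*} [Fintype ι] [DecidableEq ι] [Ring R]
    (s : Finset ι) {f : ι → R} {a b : R} (ha : ∀ i ∈ s, f i = a) (hb : ∀ i ∉ s, f i = b) :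
    ∑ i, f i = #s * a + (Fintype.card ι - #s) * b := by
  rw [← sum_add_sum_compl s f, sum_congr rfl ha, sum_congr rfl fun i hi => hb i (mem_compl.1 hi),
    sum_const, sum_const, card_compl, nsmul_eq_mul, nsmul_eq_mul, Nat.cast_sub (card_le_univ s)]

def twoGroupMat {ι : Type*} {M : ℕ} (s : Finset (Fin M)) (r0 r1 : ι → ℝ) :
    Matrix (Fin M) ι ℝ :=
  of fun j => if j ∈ s then r1 else r0

lemma sum_twoGroupMat {ι : Type*} {M : ℕ} (s : Finset (Fin M)) (r0 r1 : ι → ℝ)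
    (g : (ι → ℝ) → ℝ) : ∑ j, g (twoGroupMat s r0 r1 j) = #s * g r1 + (M - #s) * g r0 := by
  rw [sum_eq_card_mul_add_of_two_valued s (f := fun j => g (twoGroupMat s r0 r1 j))
    (fun j hj => congrArg g (if_pos hj)) (fun j hj => congrArg g (if_neg hj)), Fintype.card_fin]

lemma transpose_twoGroupMat_mul_mul_twoGroupMat_apply {ι : Type*} {M : ℕ} (s : Finset (Fin M))
    (r0 r1 : ι → ℝ) (c d : ℝ) (i i' : ι) :
    ((twoGroupMat s r0 r1)ᵀ * (c • 1 + d • avgMat (Fin M)) * twoGroupMat s r0 r1 :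
        Matrix ι ι ℝ) i i'
      = c * (#s * (r1 i * r1 i') + (M - #s) * (r0 i * r0 i'))
        + d / M * ((#s * r1 i + (M - #s) * r0 i) * (#s * r1 i' + (M - #s) * r0 i')) := by
  rw [transpose_mul_smul_one_add_smul_avgMat_mul_apply, sum_twoGroupMat s r0 r1 fun r => r i * r i',
    sum_twoGroupMat s r0 r1 fun r => r i, sum_twoGroupMat s r0 r1 fun r => r i']

lemma inv_apply_one_one_fin_two {α : Type*} [Field α] (A : Matrix (Fin 2) (Fin 2) α) :
    A⁻¹ 1 1 = A 0 0 / A.det := by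
  simp [Matrix.inv_def, adjugate_fin_two, Ring.inverse_eq_inv', div_eq_inv_mul]

section TwoArms

variable {M : ℕ} (s : Finset (Fin M)) (ρc ρt : ℝ)

/-- Row `j` of `P X` when facility `j` is treated exactly if `j ∈ s`. -/
def armRows : Matrix (Fin M) (Fin 2) ℝ := twoGroupMat s ![ρc⁻¹, 0] ![ρt⁻¹, ρt⁻¹]

lemma diagonal_mul_eq_broadcast_mul_armRows (K L : ℕ) {w : Fin M → ℝ}
    (hw : ∀ j, w j = 0 ∨ w j = 1) :
    (diagonal fun p : Fin M × Fin K × Fin L => if w p.1 = 0 then 1 / ρc else 1 / ρt)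
        * (of fun p i => if i = 0 then 1 else w p.1 : Matrix (Fin M × Fin K × Fin L) (Fin 2) ℝ)
      = broadcast M K L * armRows {j | w j = 1} ρc ρt := by
  ext p i
  rw [broadcast_mul_apply, diagonal_mul]
  rcases hw p.1 with h | h <;> fin_cases i <;> simp [armRows, twoGroupMat, h]

def armGram (l3 l4 : ℝ) : Matrix (Fin 2) (Fin 2) ℝ :=
  (armRows s ρc ρt)ᵀ * (l3⁻¹ • 1 + (l4⁻¹ - l3⁻¹) • avgMat (Fin M)) * armRows s ρc ρt

lemma smul_armGram_isUnit_and_inv_apply_one_one {π κ l3 l4 : ℝ} (hs : (#s : ℝ) = (1 - π) * M)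
    (hM : M ≠ 0) (hπ0 : π ≠ 0) (hπ1 : 1 - π ≠ 0) (hρc : ρc ≠ 0) (hρt : ρt ≠ 0) (hκ : κ ≠ 0)
    (hl3 : l3 ≠ 0) (hl4 : l4 ≠ 0) :
    IsUnit (κ • armGram s ρc ρt l3 l4) ∧
      (κ • armGram s ρc ρt l3 l4)⁻¹ 1 1
        = l3 / (M * κ) * (ρc ^ 2 / π + ρt ^ 2 / (1 - π)) + (l4 - l3) * (ρc - ρt) ^ 2 / (M * κ) := by
  have hM' : (M : ℝ) ≠ 0 := Nat.cast_ne_zero.2 hM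
  have hdet : (κ • armGram s ρc ρt l3 l4).det
      = κ ^ 2 * (π * (1 - π) * M ^ 2) / (l3 * l4 * ρc ^ 2 * ρt ^ 2) := by
    simp only [det_fin_two, armGram, armRows, Matrix.smul_apply,
      transpose_twoGroupMat_mul_mul_twoGroupMat_apply, hs, cons_val_zero, cons_val_one,
      cons_val_fin_one, smul_eq_mul]
    field_simp
    ring
  have hdet0 : (κ • armGram s ρc ρt l3 l4).det ≠ 0 := by
    rw [hdet]
    simp [hκ, hπ0, hπ1, hM', hl3, hl4, hρc, hρt]
  refine ⟨(isUnit_iff_isUnit_det _).2 (isUnit_iff_ne_zero.2 hdet0), ?_⟩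
  rw [inv_apply_one_one_fin_two, hdet]
  simp only [armGram, armRows, Matrix.smul_apply, transpose_twoGroupMat_mul_mul_twoGroupMat_apply,
    hs, cons_val_zero, smul_eq_mul]
  field_simp
  ring

end TwoArms

end NestedExchangeable

open NestedExchangeable

/-- Theorem 2, randomization at level 3. -/
theorem model_based_variance_level3 (M K L : ℕ) (hM : 2 ≤ M) (hK : 2 ≤ K) (hL : 2 ≤ L)
    (a0 a1 a2 : ℝ) (π ρc ρt : ℝ)
    (hπ : π ∈ Set.Ioo (0 : ℝ) 1) (hρc : ρc ≠ 0) (hρt : ρt ≠ 0)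
    (w : Fin M → ℝ) (hw : ∀ j, w j = 0 ∨ w j = 1)
    (hcard : ((Finset.univ.filter fun j => w j = 1).card : ℝ) = (1 - π) * (M : ℝ))
    (h1 : 0 < lam1 a0) (h2 : 0 < lam2 L a0 a1)
    (h3 : 0 < lam3 K L a0 a1 a2) (h4 : 0 < lam4 M K L a0 a1 a2)
    (P : Matrix (Fin M × Fin K × Fin L) (Fin M × Fin K × Fin L) ℝ)
    (hP : P = Matrix.diagonal fun p => if w p.1 = 0 then 1 / ρc else 1 / ρt)
    (X : Matrix (Fin M × Fin K × Fin L) (Fin 2) ℝ)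
    (hX : X = Matrix.of fun p i => if i = 0 then 1 else w p.1)
    (Sig1 : Matrix (Fin 2) (Fin 2) ℝ)
    (hSig1 : Sig1 = Xᵀ * P * (Rmat M K L a0 a1 a2)⁻¹ * P * X) :
    IsUnit Sig1 ∧
    Sig1⁻¹ 1 1 = lam3 K L a0 a1 a2 / ((M : ℝ) * (K : ℝ) * (L : ℝ)) *
        (ρc ^ 2 / π + ρt ^ 2 / (1 - π))
      + (lam4 M K L a0 a1 a2 - lam3 K L a0 a1 a2) * (ρc - ρt) ^ 2 /
        ((M : ℝ) * (K : ℝ) * (L : ℝ)) := by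
  have hPX : P * X = broadcast M K L * armRows {j | w j = 1} ρc ρt := by
    rw [hP, hX]
    exact diagonal_mul_eq_broadcast_mul_armRows ρc ρt K L hw
  have hSig : Sig1 = ((K : ℝ) * L) •
      armGram {j | w j = 1} ρc ρt (lam3 K L a0 a1 a2) (lam4 M K L a0 a1 a2) := by
    have hPt : Pᵀ = P := by rw [hP, diagonal_transpose]
    rw [hSig1, Rmat_eq_spectralMat, inv_spectralMat M K L h1.ne' h2.ne' h3.ne' h4.ne', armGram,
      ← transpose_mul_spectralMat_mul_broadcast_mul M K L (lam1 a0)⁻¹ (lam2 L a0 a1)⁻¹, ← hPX,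
      transpose_mul, hPt]
    simp only [Matrix.mul_assoc]
  have hKL : (K : ℝ) * L ≠ 0 := by positivity
  rw [hSig, mul_assoc (M : ℝ)]
  exact smul_armGram_isUnit_and_inv_apply_one_one _ ρc ρt hcard (by omega) hπ.1.ne'
    (sub_pos.2 hπ.2).ne' hρc hρt hKL h3.ne' h4.ne'
end
end

section
/- (Theorem 2, randomization at level 2) Let π ∈ (0,1) be such that πK is an integer, let w ∈ {0,1}^{MK} (coordinates indexed by pairs (j,k)) be such that for every j ∈ {1,…,M} exactly (1−π)K of the coordinates w_{j1},…,w_{jK} equal 1, and let z = w ⊗ 1_L ∈ ℝ^{MKL} (so z_{jkl} = w_{jk}). Let ρc, ρt be nonzero real numbers, let P be the MKL×MKL diagonal matrix whose (j,k,l) diagonal entry is 1/ρc if z_{jkl} = 0 and 1/ρt if z_{jkl} = 1, and let X be the MKL×2 matrix with first column 1_{MKL} and second column z. Assume λ1, λ2, λ3, λ4 > 0 and define Σ1 = Xᵀ P R^{−1} P X. Then Σ1 is invertible and the lower-right entry of Σ1^{−1} equals (λ2/(MKL)) · (ρc²/π + ρt²/(1−π)) + (λ4 − λ2)(ρc − ρt)²/(MKL).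 -/
open Matrix Polynomial Finset

noncomputable section

/-! The correlation matrix is diagonalised by four complete orthogonal idempotents, Kronecker
products of the identity and of the averaging matrices on facilities, providers and units, with
eigenvalues `λ1, …, λ4`; hence it is invertible. The columns of `P X` are constant on each
provider (`w ⊗ 1_L`), and since every facility has the same share of treated providers they also
have equal facility means, so `R` acts on them as `λ2` plus a rank-one term in `1`. This makes
`R⁻¹ P X` explicit, and `Σ1 = MKL (λ2⁻¹ E[φ φᵀ] + (λ4⁻¹ - λ2⁻¹) E[φ] E[φ]ᵀ)`, where `φ` is the
row of `P X` of a unit and `E` averages over the two treatment arms with weights `π, 1 - π`.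
What remains is the inversion of a `2 × 2` matrix. -/

open scoped Kronecker

theorem OrthogonalIdempotents.sum_smul_mul_sum_smul {R A ι : Type*} [CommSemiring R]
    [Semiring A] [Algebra R A] [Fintype ι] {e : ι → A} (he : OrthogonalIdempotents e)
    (c d : ι → R) : (∑ i, c i • e i) * (∑ i, d i • e i) = ∑ i, (c i * d i) • e i := by
  classical
  simp_rw [Finset.sum_mul_sum, smul_mul_smul_comm, he.mul_eq, smul_ite, smul_zero,
    Finset.sum_ite_eq]
  simp

theorem CompleteOrthogonalIdempotents.isUnit_sum_smul {𝕜 A ι : Type*} [Field 𝕜] [Ring A]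
    [Algebra 𝕜 A] [Fintype ι] {e : ι → A} (he : CompleteOrthogonalIdempotents e) {c : ι → 𝕜}
    (hc : ∀ i, c i ≠ 0) : IsUnit (∑ i, c i • e i) := by
  have mul_eq_one (c d : ι → 𝕜) (h : ∀ i, c i * d i = 1) :
      (∑ i, c i • e i) * (∑ i, d i • e i) = 1 := by
    simp [he.sum_smul_mul_sum_smul, h, he.complete]
  exact ⟨⟨_, ∑ i, (c i)⁻¹ • e i, mul_eq_one _ _ fun i => mul_inv_cancel₀ (hc i),
    mul_eq_one _ _ fun i => inv_mul_cancel₀ (hc i)⟩, rfl⟩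

theorem Matrix.inv_apply_one_one_fin_two {𝕜 : Type*} [Field 𝕜] (A : Matrix (Fin 2) (Fin 2) 𝕜) :
    A⁻¹ 1 1 = A 0 0 / A.det := by
  simp [inv_def, adjugate_fin_two, Ring.inverse_eq_inv', div_eq_inv_mul]

theorem sum_comp_of_card_filter_eq {κ : Type*} [Fintype κ] {b : κ → ℝ}
    (hb : ∀ k, b k = 0 ∨ b k = 1) {π : ℝ}
    (hcard : ((univ.filter fun k => b k = 1).card : ℝ) = (1 - π) * Fintype.card κ)
    (f : ℝ → ℝ) : ∑ k, f (b k) = Fintype.card κ * (π * f 0 + (1 - π) * f 1) := by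
  have hf (k : κ) : f (b k) = f 0 + (f 1 - f 0) * if b k = 1 then 1 else 0 := by
    rcases hb k with h | h <;> simp [h]
  rw [Finset.sum_congr rfl fun k _ => hf k, Finset.sum_add_distrib, ← Finset.mul_sum,
    Finset.sum_boole, hcard]
  simp
  ring

def avgMatrix (n : Type*) [Fintype n] : Matrix n n ℝ := of fun _ _ => (Fintype.card n : ℝ)⁻¹

theorem isIdempotentElem_avgMatrix (n : Type*) [Fintype n] [Nonempty n] :
    IsIdempotentElem (avgMatrix n) := by
  ext i j
  simp [avgMatrix, mul_apply]

section NestedExchangeable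

variable {M K L : ℕ}

def nestedProj (M K L : ℕ) :
    Fin 4 → Matrix (Fin M × Fin K × Fin L) (Fin M × Fin K × Fin L) ℝ :=
  ![1 ⊗ₖ (1 ⊗ₖ (1 - avgMatrix (Fin L))),
    1 ⊗ₖ ((1 - avgMatrix (Fin K)) ⊗ₖ avgMatrix (Fin L)),
    (1 - avgMatrix (Fin M)) ⊗ₖ (avgMatrix (Fin K) ⊗ₖ avgMatrix (Fin L)),
    avgMatrix (Fin M) ⊗ₖ (avgMatrix (Fin K) ⊗ₖ avgMatrix (Fin L))]

theorem completeOrthogonalIdempotents_nestedProj [NeZero M] [NeZero K] [NeZero L] :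
    CompleteOrthogonalIdempotents (nestedProj M K L) := by
  have hM := isIdempotentElem_avgMatrix (Fin M)
  have hK := isIdempotentElem_avgMatrix (Fin K)
  have hL := isIdempotentElem_avgMatrix (Fin L)
  refine CompleteOrthogonalIdempotents.iff_ortho_complete.2 ⟨fun i j hij => ?_, ?_⟩
  · fin_cases i <;> fin_cases j <;>
      simp_all [nestedProj, ← mul_kronecker_mul, hK.eq, hL.eq, hM.mul_one_sub_self,
        hK.mul_one_sub_self, hL.mul_one_sub_self, hM.one_sub_mul_self, hK.one_sub_mul_self,
        hL.one_sub_mul_self]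
  · rw [show (1 : Matrix (Fin M × Fin K × Fin L) _ ℝ) = 1 ⊗ₖ (1 ⊗ₖ 1) by
      simp only [one_kronecker_one]]
    ext p q
    simp only [nestedProj, Fin.sum_univ_four, Matrix.add_apply, kroneckerMap_apply,
      Matrix.sub_apply, Matrix.cons_val]
    ring

theorem Rmat_eq_sum_smul_nestedProj (a0 a1 a2 : ℝ) :
    Rmat M K L a0 a1 a2 =
      ∑ i, ![lam1 a0, lam2 L a0 a1, lam3 K L a0 a1 a2, lam4 M K L a0 a1 a2] i •
        nestedProj M K L i := by
  ext ⟨j, k, l⟩ ⟨j', k', l'⟩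
  have hM : (M : ℝ) ≠ 0 := Nat.cast_ne_zero.2 j.pos.ne'
  have hK : (K : ℝ) ≠ 0 := Nat.cast_ne_zero.2 k.pos.ne'
  have hL : (L : ℝ) ≠ 0 := Nat.cast_ne_zero.2 l.pos.ne'
  simp only [Rmat, nestedProj, avgMatrix, Fin.sum_univ_four, Matrix.add_apply,
    Matrix.smul_apply, kroneckerMap_apply, Matrix.sub_apply, Matrix.cons_val, one_apply,
    of_apply, Prod.mk.injEq, Fintype.card_fin, lam1, lam2, lam3, lam4, smul_eq_mul]
  split_ifs <;> simp_all <;> field_simp <;> ring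

theorem isUnit_Rmat [NeZero M] [NeZero K] [NeZero L] {a0 a1 a2 : ℝ}
    (h1 : lam1 a0 ≠ 0) (h2 : lam2 L a0 a1 ≠ 0) (h3 : lam3 K L a0 a1 a2 ≠ 0)
    (h4 : lam4 M K L a0 a1 a2 ≠ 0) : IsUnit (Rmat M K L a0 a1 a2) := by
  rw [Rmat_eq_sum_smul_nestedProj]
  refine completeOrthogonalIdempotents_nestedProj.isUnit_sum_smul fun i => ?_
  fin_cases i <;> simpa

theorem Rmat_apply (a0 a1 a2 : ℝ) (p q : Fin M × Fin K × Fin L) :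
    Rmat M K L a0 a1 a2 p q = (1 - a0) * (if p = q then 1 else 0)
      + (a0 - a1) * (if p.1 = q.1 ∧ p.2.1 = q.2.1 then 1 else 0)
      + (a1 - a2) * (if p.1 = q.1 then 1 else 0) + a2 := by
  obtain ⟨j, k, l⟩ := p
  obtain ⟨j', k', l'⟩ := q
  simp only [Rmat, of_apply, Prod.mk.injEq]
  split_ifs <;> simp_all

/-- The paper's `G ⊗ 1_L`. -/
def expandUnits (L : ℕ) {n : Type*} (G : Fin M × Fin K → n → ℝ) :
    Matrix (Fin M × Fin K × Fin L) n ℝ :=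
  of fun p c => G (p.1, p.2.1) c

theorem expandUnits_transpose_mul_expandUnits {m n : Type*} (F : Fin M × Fin K → m → ℝ)
    (H : Fin M × Fin K → n → ℝ) :
    (expandUnits L F)ᵀ * expandUnits L H = (L : ℝ) • ((of F)ᵀ * of H) := by
  ext a c
  simp [mul_apply, expandUnits, Fintype.sum_prod_type, Finset.mul_sum]

theorem Rmat_mul_expandUnits {n : Type*} (a0 a1 a2 : ℝ) {G : Fin M × Fin K → n → ℝ}
    {s : n → ℝ} (hG : ∀ j c, ∑ k, G (j, k) c = K * s c) :
    Rmat M K L a0 a1 a2 * expandUnits L G =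
      expandUnits L fun q c =>
        lam2 L a0 a1 * G q c + (lam4 M K L a0 a1 a2 - lam2 L a0 a1) * s c := by
  ext p c
  simp only [expandUnits, mul_apply, Rmat_apply, mul_ite, mul_one, mul_zero, ite_and, of_apply,
    add_mul, ite_mul, zero_mul, sum_add_distrib, sum_ite_eq, mem_univ, if_true,
    Fintype.sum_prod_type, sum_ite_irrel, sum_const, card_univ, Fintype.card_fin, nsmul_eq_mul,
    ← mul_sum, hG, lam2, lam4]
  ring

theorem Rmat_inv_mul_expandUnits {n : Type*} {a0 a1 a2 : ℝ} (hR : IsUnit (Rmat M K L a0 a1 a2))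
    (h2 : lam2 L a0 a1 ≠ 0) (h4 : lam4 M K L a0 a1 a2 ≠ 0) {G : Fin M × Fin K → n → ℝ}
    {s : n → ℝ} (hG : ∀ j c, ∑ k, G (j, k) c = K * s c) :
    (Rmat M K L a0 a1 a2)⁻¹ * expandUnits L G =
      expandUnits L fun q c =>
        (lam2 L a0 a1)⁻¹ * G q c + ((lam4 M K L a0 a1 a2)⁻¹ - (lam2 L a0 a1)⁻¹) * s c := by
  set G' : Fin M × Fin K → n → ℝ := fun q c =>
    (lam2 L a0 a1)⁻¹ * G q c + ((lam4 M K L a0 a1 a2)⁻¹ - (lam2 L a0 a1)⁻¹) * s c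
  have hG' (j : Fin M) (c : n) : ∑ k, G' (j, k) c = K * ((lam4 M K L a0 a1 a2)⁻¹ * s c) := by
    simp only [G', Finset.sum_add_distrib, ← Finset.mul_sum, hG, Finset.sum_const,
      Finset.card_univ, Fintype.card_fin, nsmul_eq_mul]
    ring
  have hRG' : Rmat M K L a0 a1 a2 * expandUnits L G' = expandUnits L G := by
    rw [Rmat_mul_expandUnits a0 a1 a2 hG']
    congr
    ext q c
    simp only [G']
    field_simp
    ring
  rw [← hRG', nonsing_inv_mul_cancel_left _ _ ((isUnit_iff_isUnit_det _).1 hR)]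

theorem expandUnits_transpose_mul_Rmat_inv_mul_expandUnits [NeZero M] [NeZero K] [NeZero L]
    {n : Type*} {a0 a1 a2 : ℝ} (h1 : lam1 a0 ≠ 0) (h2 : lam2 L a0 a1 ≠ 0)
    (h3 : lam3 K L a0 a1 a2 ≠ 0) (h4 : lam4 M K L a0 a1 a2 ≠ 0) {π : ℝ}
    {w : Fin M × Fin K → ℝ} (hw : ∀ j k, w (j, k) = 0 ∨ w (j, k) = 1)
    (hcard : ∀ j, ((univ.filter fun k => w (j, k) = 1).card : ℝ) = (1 - π) * K)
    (F : ℝ → n → ℝ) :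
    (expandUnits L fun q c => F (w q) c)ᵀ * (Rmat M K L a0 a1 a2)⁻¹ *
        expandUnits L (fun q c => F (w q) c) =
      of fun a c => (M * K * L : ℝ) *
        ((lam2 L a0 a1)⁻¹ * (π * (F 0 a * F 0 c) + (1 - π) * (F 1 a * F 1 c)) +
          ((lam4 M K L a0 a1 a2)⁻¹ - (lam2 L a0 a1)⁻¹) *
            ((π * F 0 a + (1 - π) * F 1 a) * (π * F 0 c + (1 - π) * F 1 c))) := by
  have hrow (f : ℝ → ℝ) (j : Fin M) : ∑ k, f (w (j, k)) = K * (π * f 0 + (1 - π) * f 1) := by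
    simpa using sum_comp_of_card_filter_eq (hw j) (by simpa using hcard j) f
  have hsum (f : ℝ → ℝ) : ∑ q, f (w q) = M * K * (π * f 0 + (1 - π) * f 1) := by
    simp [Fintype.sum_prod_type, hrow, mul_assoc]
  rw [Matrix.mul_assoc, Rmat_inv_mul_expandUnits (isUnit_Rmat h1 h2 h3 h4) h2 h4
    fun j c => hrow (F · c) j, expandUnits_transpose_mul_expandUnits]
  ext a c
  simp only [Matrix.smul_apply, mul_apply, transpose_apply, of_apply, smul_eq_mul]
  rw [hsum fun x => F x a * ((lam2 L a0 a1)⁻¹ * F x c +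
    ((lam4 M K L a0 a1 a2)⁻¹ - (lam2 L a0 a1)⁻¹) * (π * F 0 c + (1 - π) * F 1 c))]
  ring

end NestedExchangeable

/-- Theorem 2, randomization at level 2. -/
theorem model_based_variance_level2 (M K L : ℕ) (hM : 2 ≤ M) (hK : 2 ≤ K) (hL : 2 ≤ L)
    (a0 a1 a2 : ℝ) (π ρc ρt : ℝ)
    (hπ : π ∈ Set.Ioo (0 : ℝ) 1) (hρc : ρc ≠ 0) (hρt : ρt ≠ 0)
    (w : Fin M × Fin K → ℝ) (hw : ∀ j k, w (j, k) = 0 ∨ w (j, k) = 1)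
    (hcard : ∀ j, ((Finset.univ.filter fun k => w (j, k) = 1).card : ℝ) =
      (1 - π) * (K : ℝ))
    (h1 : 0 < lam1 a0) (h2 : 0 < lam2 L a0 a1)
    (h3 : 0 < lam3 K L a0 a1 a2) (h4 : 0 < lam4 M K L a0 a1 a2)
    (P : Matrix (Fin M × Fin K × Fin L) (Fin M × Fin K × Fin L) ℝ)
    (hP : P = Matrix.diagonal fun p => if w (p.1, p.2.1) = 0 then 1 / ρc else 1 / ρt)
    (X : Matrix (Fin M × Fin K × Fin L) (Fin 2) ℝ)
    (hX : X = Matrix.of fun p i => if i = 0 then 1 else w (p.1, p.2.1))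
    (Sig1 : Matrix (Fin 2) (Fin 2) ℝ)
    (hSig1 : Sig1 = Xᵀ * P * (Rmat M K L a0 a1 a2)⁻¹ * P * X) :
    IsUnit Sig1 ∧
    Sig1⁻¹ 1 1 = lam2 L a0 a1 / ((M : ℝ) * (K : ℝ) * (L : ℝ)) *
        (ρc ^ 2 / π + ρt ^ 2 / (1 - π))
      + (lam4 M K L a0 a1 a2 - lam2 L a0 a1) * (ρc - ρt) ^ 2 /
        ((M : ℝ) * (K : ℝ) * (L : ℝ)) := by
  obtain ⟨hπ0, hπ1⟩ := hπ
  have : NeZero M := ⟨by omega⟩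
  have : NeZero K := ⟨by omega⟩
  have : NeZero L := ⟨by omega⟩
  set φ : ℝ → Fin 2 → ℝ := fun x i => (if x = 0 then 1 / ρc else 1 / ρt) * if i = 0 then 1 else x
  have hφ0 : φ 0 = ![ρc⁻¹, 0] := by ext i; fin_cases i <;> simp [φ]
  have hφ1 : φ 1 = ![ρt⁻¹, ρt⁻¹] := by ext i; fin_cases i <;> simp [φ]
  have hPX : P * X = expandUnits L fun q i => φ (w q) i := by
    ext p i
    simp [hP, hX, diagonal_mul, expandUnits, φ]
  have hSig : Sig1 = (P * X)ᵀ * (Rmat M K L a0 a1 a2)⁻¹ * (P * X) := by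
    rw [hSig1, transpose_mul, hP, diagonal_transpose]
    simp only [Matrix.mul_assoc]
  rw [hPX, expandUnits_transpose_mul_Rmat_inv_mul_expandUnits h1.ne' h2.ne' h3.ne' h4.ne' hw
    hcard, hφ0, hφ1] at hSig
  have hdet : Sig1.det = (M * K * L : ℝ) ^ 2 * π * (1 - π) /
      (ρc ^ 2 * ρt ^ 2 * lam2 L a0 a1 * lam4 M K L a0 a1 a2) := by
    rw [hSig, det_fin_two]
    simp only [of_apply, cons_val_zero, cons_val_one, cons_val_fin_one]
    field_simp
    ring
  have hdet0 : Sig1.det ≠ 0 := by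
    have := sub_ne_zero.2 hπ1.ne'
    rw [hdet]
    positivity
  refine ⟨(isUnit_iff_isUnit_det _).2 hdet0.isUnit, ?_⟩
  rw [inv_apply_one_one_fin_two, hdet, hSig]
  simp only [of_apply, cons_val_zero]
  field_simp
  ring
end
end

section
/- (Theorem 3, randomization at level 4) Let π ∈ (0,1) and let ρc, ρt be nonzero real numbers. Let Xc be the MKL×2 matrix whose first column is 1_{MKL} and whose second column is the zero vector, and let Xt be the MKL×2 matrix whose both columns equal 1_{MKL}. Define the 2×2 matrices M1 = π ρc^{−2} Xcᵀ Xc + (1−π) ρt^{−2} Xtᵀ Xt and M0 = π ρc^{−2} Xcᵀ R Xc + (1−π) ρt^{−2} Xtᵀ R Xt. Then M1 is invertible and the lower-right entry of the sandwich matrix M1^{−1} M0 M1^{−1} equals (λ4/(MKL)) · (ρc²/π + ρt²/(1−π)); that is, the GEE sandwich variance under an independence working correlation coincides with the model-based variance under the true extended nested exchangeable correlation. -/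
/-!
Every row of `R` sums to `λ4`, i.e. constant vectors are eigenvectors of `R` with eigenvalue `λ4`.
Both design matrices have constant columns, so `R Xc = λ4 Xc` and `R Xt = λ4 Xt`, hence
`M0 = λ4 M1` and the sandwich collapses to `λ4 M1⁻¹`. Finally `M1 = MKL [[a + b, b], [b, b]]` with
`a = π / ρc²`, `b = (1 - π) / ρt²`, whose inverse has lower-right entry
`(a + b) / (MKL a b) = (1/a + 1/b) / MKL`.
-/

open Matrix Polynomial Finset

noncomputable section

lemma sum_ite_eq_else {α R : Type*} [Fintype α] [DecidableEq α] [CommRing R] (y : α) (u v : R) :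
    ∑ x, (if x = y then u else v) = u + ((Fintype.card α : R) - 1) * v := by
  have split : ∀ x, (if x = y then u else v) = v + if x = y then u - v else 0 := by
    intro x; split_ifs <;> ring
  simp only [split, sum_add_distrib, sum_const, card_univ, nsmul_eq_mul, Fintype.sum_ite_eq']
  ring

theorem Matrix.mul_replicateRow_of_sum_row_eq {m n R : Type*} [Fintype m] [CommSemiring R]
    {A : Matrix m m R} {c : R} (hA : ∀ i, ∑ j, A i j = c) (v : n → R) :
    A * replicateRow m v = c • replicateRow m v := by
  ext i k
  simp [mul_apply, ← sum_mul, hA]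

theorem Matrix.transpose_replicateRow_mul_replicateRow {ι n R : Type*} [Fintype ι]
    [CommSemiring R] (v w : n → R) :
    (replicateRow ι v)ᵀ * replicateRow ι w = (Fintype.card ι : R) • vecMulVec v w := by
  ext i j
  simp [mul_apply, vecMulVec_apply, mul_comm]

theorem Matrix.inv_mul_smul_mul_inv {n K : Type*} [Fintype n] [DecidableEq n] [Field K]
    {A : Matrix n n K} (hA : IsUnit A) (c : K) : A⁻¹ * (c • A) * A⁻¹ = c • A⁻¹ := by
  rw [Matrix.mul_smul, Matrix.smul_mul, nonsing_inv_mul A ((isUnit_iff_isUnit_det A).mp hA),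
    one_mul]

theorem Matrix.inv_fin_two_apply_one_one {K : Type*} [Field K] (A : Matrix (Fin 2) (Fin 2) K) :
    A⁻¹ 1 1 = A 0 0 / A.det := by
  simp [inv_def, adjugate_fin_two, Ring.inverse_eq_inv', div_eq_inv_mul]

section NestedExchangeable

variable (M K L : ℕ) (a0 a1 a2 : ℝ)

lemma Rmat_apply_eq_ite (p q : Fin M × Fin K × Fin L) :
    Rmat M K L a0 a1 a2 p q =
      if q.1 = p.1 then (if q.2.1 = p.2.1 then (if q.2.2 = p.2.2 then 1 else a0) else a1)
      else a2 := by
  obtain ⟨j, k, l⟩ := p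
  obtain ⟨j', k', l'⟩ := q
  simp only [Rmat, of_apply, Prod.mk.injEq]
  by_cases hj : j' = j <;> by_cases hk : k' = k <;> by_cases hl : l' = l <;> simp_all [eq_comm]

lemma sum_Rmat_row (p : Fin M × Fin K × Fin L) :
    ∑ q, Rmat M K L a0 a1 a2 p q = lam4 M K L a0 a1 a2 := by
  simp only [Rmat_apply_eq_ite, Fintype.sum_prod_type, sum_ite_irrel, sum_const, card_univ,
    sum_ite_eq_else, Fintype.card_prod, Fintype.card_fin, nsmul_eq_mul, Nat.cast_mul, lam4]
  ring

end NestedExchangeable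

/-- Theorem 3, randomization at level 4: the independence-working-correlation
sandwich variance coincides with the model-based variance under the true correlation. -/
theorem sandwich_variance_level4 (M K L : ℕ) (hM : 2 ≤ M) (hK : 2 ≤ K) (hL : 2 ≤ L)
    (a0 a1 a2 : ℝ) (π ρc ρt : ℝ)
    (hπ : π ∈ Set.Ioo (0 : ℝ) 1) (hρc : ρc ≠ 0) (hρt : ρt ≠ 0)
    (Xc Xt : Matrix (Fin M × Fin K × Fin L) (Fin 2) ℝ)
    (hXc : Xc = Matrix.of fun _ i => if i = 0 then 1 else 0)
    (hXt : Xt = Matrix.of fun _ _ => 1)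
    (M1 M0 : Matrix (Fin 2) (Fin 2) ℝ)
    (hM1 : M1 = (π * (ρc ^ 2)⁻¹) • (Xcᵀ * Xc) + ((1 - π) * (ρt ^ 2)⁻¹) • (Xtᵀ * Xt))
    (hM0 : M0 = (π * (ρc ^ 2)⁻¹) • (Xcᵀ * Rmat M K L a0 a1 a2 * Xc)
        + ((1 - π) * (ρt ^ 2)⁻¹) • (Xtᵀ * Rmat M K L a0 a1 a2 * Xt)) :
    IsUnit M1 ∧
    (M1⁻¹ * M0 * M1⁻¹) 1 1 = lam4 M K L a0 a1 a2 / ((M : ℝ) * (K : ℝ) * (L : ℝ)) *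
      (ρc ^ 2 / π + ρt ^ 2 / (1 - π)) := by
  obtain ⟨hπ0, hπ1⟩ := hπ
  set a := π * (ρc ^ 2)⁻¹
  set b := (1 - π) * (ρt ^ 2)⁻¹
  set n : ℝ := (M : ℝ) * (K : ℝ) * (L : ℝ)
  have hn : 0 < n := by
    have : 0 < M * K * L := Nat.mul_pos (Nat.mul_pos (by omega) (by omega)) (by omega)
    simp only [n]
    exact_mod_cast this
  have hXc' : Xc = replicateRow _ fun i => if i = 0 then 1 else 0 := hXc
  have hXt' : Xt = replicateRow _ 1 := hXt
  have hRX (v : Fin 2 → ℝ) := mul_replicateRow_of_sum_row_eq (sum_Rmat_row M K L a0 a1 a2) v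
  have hM0M1 : M0 = lam4 M K L a0 a1 a2 • M1 := by
    rw [hM0, hM1, Matrix.mul_assoc, Matrix.mul_assoc, hXc', hXt', hRX, hRX, Matrix.mul_smul,
      Matrix.mul_smul, smul_add, smul_comm a, smul_comm b]
  have hM1_eq : M1 = !![n * (a + b), n * b; n * b, n * b] := by
    rw [hM1, hXc', hXt', transpose_replicateRow_mul_replicateRow,
      transpose_replicateRow_mul_replicateRow]
    ext i j
    fin_cases i <;> fin_cases j <;> simp [vecMulVec_apply, n] <;> ring
  have hdet : M1.det = n ^ 2 * (a * b) := by
    rw [hM1_eq, det_fin_two_of]; ring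
  have hM1_unit : IsUnit M1 := by
    rw [isUnit_iff_isUnit_det, hdet, isUnit_iff_ne_zero]
    have : 0 < 1 - π := by linarith
    positivity
  refine ⟨hM1_unit, ?_⟩
  rw [hM0M1, inv_mul_smul_mul_inv hM1_unit, Matrix.smul_apply, inv_fin_two_apply_one_one, hdet,
    hM1_eq]
  simp only [of_apply, cons_val', cons_val_zero, empty_val', cons_val_fin_one, smul_eq_mul, a, b]
  field_simp
  ring
end
end
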